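/- arXiv:2006.03216 — 8 statements merged into one kernel-verified Lean document; each statement's English description precedes it below -/
import Mathlib

section
/- Let a, b ≥ 0 with a ≥ b, and suppose b ≤ k₁ a + k₂ where k₁ ∈ [0,1) and k₂ ≥ 0. Then (a+b)² ≤ 2((1+k₁)/(1−k₁))(a² − b²) + 4k₂²/(1−k₁)². -/
/-! With `x = (1 - k₁)(a + b)`, `y = (1 + k₁)(a - b)` and `z = 2k₂`, the hypothesis
`b ≤ k₁ a + k₂` reads `x ≤ y + z`, and the claim, multiplied by `(1 - k₁)²`, reads
`x² ≤ 2xy + z²`. The latter holds for `x ≥ 0`: if `x ≤ y` then `x² ≤ xy`, and otherwise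
`0 ≤ x - y ≤ z` gives `x² - 2xy ≤ (x - y)² ≤ z²`. -/

theorem sq_le_two_mul_mul_add_sq_of_le_add {x y z : ℝ} (hx : 0 ≤ x) (h : x ≤ y + z) :
    x ^ 2 ≤ 2 * x * y + z ^ 2 := by
  rcases le_total x y with hxy | hyx
  · nlinarith [mul_le_mul_of_nonneg_left hxy hx]
  · have hsq : (x - y) ^ 2 ≤ z ^ 2 := pow_le_pow_left₀ (sub_nonneg.2 hyx) (by linarith) 2
    nlinarith [sq_nonneg y]

theorem elliptic_sufficiency_general (a b k₁ k₂ : ℝ) (hb : 0 ≤ b) (hba : b ≤ a)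
    (hk₁' : k₁ < 1)
    (h : b ≤ k₁ * a + k₂) :
    (a + b) ^ 2 ≤ 2 * ((1 + k₁) / (1 - k₁)) * (a ^ 2 - b ^ 2)
      + 4 * k₂ ^ 2 / (1 - k₁) ^ 2 := by
  have hu : 0 < 1 - k₁ := sub_pos.2 hk₁'
  have key := sq_le_two_mul_mul_add_sq_of_le_add (x := (1 - k₁) * (a + b))
    (y := (1 + k₁) * (a - b)) (z := 2 * k₂) (mul_nonneg hu.le (by linarith)) (by linarith)
  have hrhs : 2 * ((1 + k₁) / (1 - k₁)) * (a ^ 2 - b ^ 2) + 4 * k₂ ^ 2 / (1 - k₁) ^ 2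
      = (2 * ((1 - k₁) * (a + b)) * ((1 + k₁) * (a - b)) + (2 * k₂) ^ 2) / (1 - k₁) ^ 2 := by
    field_simp
    ring
  rw [hrhs, le_div_iff₀ (by positivity)]
  linarith

/-- Sufficiency direction: if b ≤ k₁ a + k₂ with 0 ≤ b ≤ a, k₁ ∈ [0,1), k₂ ≥ 0, then
    (a+b)² ≤ 2((1+k₁)/(1−k₁))(a²−b²) + 4k₂²/(1−k₁)². -/
theorem elliptic_sufficiency (a b k₁ k₂ : ℝ) (hb : 0 ≤ b) (hba : b ≤ a)
    (hk₁ : 0 ≤ k₁) (hk₁' : k₁ < 1) (hk₂ : 0 ≤ k₂)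
    (h : b ≤ k₁ * a + k₂) :
    (a + b) ^ 2 ≤ 2 * ((1 + k₁) / (1 - k₁)) * (a ^ 2 - b ^ 2)
      + 4 * k₂ ^ 2 / (1 - k₁) ^ 2 :=
  elliptic_sufficiency_general a b k₁ k₂ hb hba hk₁' h
end

section
/- The function f(z) = 3z|z|² − z|z|⁸ is injective on the open unit disk 𝔻 in ℂ. -/
/-!
The map is radial: `f z = g(|z|) z` with `g r = 3r² - r⁸ ≥ 0` on `[0, 1)`. Taking norms,
`|f z| = h(|z|)` with `h r = 3r³ - r⁹ = φ(r³)`, where `φ t = 3t - t³` is strictly increasing on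
`(-1, 1)`. So `f z₁ = f z₂` forces `|z₁| = |z₂|`, and then the common nonzero factor `g(|z|)`
cancels (it vanishes only at `z = 0`).
-/

open Set

theorem injOn_smul_self_of_injOn_mul_self {E : Type*} [NormedAddCommGroup E] [NormedSpace ℝ E]
    {g : ℝ → ℝ} {s : Set ℝ} (hg : ∀ r ∈ s, 0 ≤ g r) (h0 : 0 ∈ s)
    (hinj : InjOn (fun r => g r * r) s) :
    InjOn (fun x : E => g ‖x‖ • x) {x | ‖x‖ ∈ s} := by
  intro x hx y hy hxy
  simp only at hxy
  have hnorm : ‖x‖ = ‖y‖ := hinj hx hy <| by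
    simpa only [norm_smul, Real.norm_eq_abs, abs_of_nonneg (hg _ hx), abs_of_nonneg (hg _ hy)]
      using congrArg norm hxy
  by_cases hgx : g ‖x‖ = 0
  · have hx0 : ‖x‖ = 0 := hinj hx h0 (by simp [hgx])
    rw [norm_eq_zero.1 hx0, norm_eq_zero.1 (hnorm.symm.trans hx0)]
  · rw [hnorm] at hxy hgx
    exact smul_right_injective E hgx hxy

theorem strictMonoOn_three_mul_sub_pow_three :
    StrictMonoOn (fun t : ℝ => 3 * t - t ^ 3) (Ioo (-1) 1) := by
  rintro a ⟨ha₁, ha₂⟩ b ⟨hb₁, hb₂⟩ hab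
  have hsum : a ^ 2 + a * b + b ^ 2 < 3 := by nlinarith [sq_nonneg (a - b)]
  have key : 0 < (b - a) * (3 - (a ^ 2 + a * b + b ^ 2)) :=
    mul_pos (by linarith) (by linarith)
  simp only
  linear_combination key

theorem strictMonoOn_three_mul_sq_sub_pow_eight_mul_self :
    StrictMonoOn (fun r : ℝ => (3 * r ^ 2 - r ^ 8) * r) (Ico 0 1) := by
  have hcomp : (fun r : ℝ => (3 * r ^ 2 - r ^ 8) * r) = (fun t => 3 * t - t ^ 3) ∘ (· ^ 3) := by
    ext r
    simp only [Function.comp_apply]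
    ring
  rw [hcomp]
  refine strictMonoOn_three_mul_sub_pow_three.comp
    ((pow_left_strictMonoOn₀ three_ne_zero).mono fun r hr => hr.1) ?_
  rintro r ⟨hr₀, hr₁⟩
  exact ⟨by linarith [pow_nonneg hr₀ 3], pow_lt_one₀ hr₀ hr₁ three_ne_zero⟩

theorem three_mul_sq_sub_pow_eight_nonneg {r : ℝ} (hr : r ∈ Ico 0 1) : 0 ≤ 3 * r ^ 2 - r ^ 8 := by
  have hr6 : r ^ 6 ≤ 1 := pow_le_one₀ hr.1 hr.2.le
  nlinarith [sq_nonneg r, mul_nonneg (sq_nonneg r) (sub_nonneg.2 hr6)]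

/-- The mapping f(z) = 3z|z|² − z|z|⁸ is injective on the open unit disk. -/
theorem example_map_injective :
    Set.InjOn (fun z : ℂ => 3 * z * (‖z‖ : ℂ) ^ 2 - z * (‖z‖ : ℂ) ^ 8)
      {z : ℂ | ‖z‖ < 1} := by
  have hradial : (fun z : ℂ => 3 * z * (‖z‖ : ℂ) ^ 2 - z * (‖z‖ : ℂ) ^ 8)
      = fun z => (3 * ‖z‖ ^ 2 - ‖z‖ ^ 8) • z := by
    ext z
    rw [Complex.real_smul]
    push_cast
    ring
  rw [hradial]
  exact (injOn_smul_self_of_injOn_mul_self (fun _ => three_mul_sq_sub_pow_eight_nonneg)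
    (left_mem_Ico.2 one_pos) strictMonoOn_three_mul_sq_sub_pow_eight_mul_self.injOn).mono
    fun z (hz : ‖z‖ < 1) => (⟨norm_nonneg z, hz⟩ : ‖z‖ ∈ Ico 0 1)
end

section
/- For f(z) = 3z|z|² − z|z|⁸ with f_z(z) = |z|²(6 − 5|z|⁶) and f_{z̄}(z) = z²(3 − 4|z|⁶), the limit of |f_{z̄}(z)|/|f_z(z)| as |z| → 1⁻ equals 1. Consequently f is not a K-quasiconformal mapping for any fixed K ≥ 1. -/
/-!
Since `|w|² = w w̄`, the map is the polynomial `3 z² z̄ − z⁵ z̄⁴` in `z` and `z̄`, so its real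
derivative has the form `h ↦ a h + b h̄`, and `a`, `b` are its Wirtinger derivatives. For `z ≠ 0`
the ratio `|f_{z̄}| / |f_z|` equals `|3 − 4|z|⁶| / |6 − 5|z|⁶|`, which is continuous at `|z| = 1`
with value `1`, whereas `|f_z| + |f_{z̄}| ≤ K (|f_z| − |f_{z̄}|)` keeps it below
`(K − 1) / (K + 1) < 1`.
-/

open Complex Metric Set

/-- Wirtinger derivative f_z = (f_x − i f_y)/2. -/
noncomputable def wdz (f : ℂ → ℂ) (z : ℂ) : ℂ :=
  (fderiv ℝ f z 1 - Complex.I * fderiv ℝ f z Complex.I) / 2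

/-- Wirtinger derivative f_{z̄} = (f_x + i f_y)/2. -/
noncomputable def wdzbar (f : ℂ → ℂ) (z : ℂ) : ℂ :=
  (fderiv ℝ f z 1 + Complex.I * fderiv ℝ f z Complex.I) / 2

open Filter Topology ComplexConjugate

lemma div_le_of_add_le_mul_sub {a b K : ℝ} (hK : 1 ≤ K) (ha : 0 ≤ a)
    (h : a + b ≤ K * (a - b)) : b / a ≤ (K - 1) / (K + 1) := by
  rcases ha.eq_or_lt with rfl | ha
  · rw [div_zero]; exact div_nonneg (by linarith) (by linarith)
  · rw [div_le_div_iff₀ ha (by linarith)]; linarith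

lemma neBot_comap_norm_nhdsLT {r : ℝ} (hr : 0 < r) : (comap (‖·‖ : ℂ → ℝ) (𝓝[<] r)).NeBot :=
  NeBot.comap_of_range_mem inferInstance
    (Complex.range_norm ▸ mem_nhdsWithin_of_mem_nhds (Ici_mem_nhds hr))

section Wirtinger

variable {f : ℂ → ℂ} {z a b : ℂ}

lemma wdz_eq_of_hasFDerivAt
    (hf : HasFDerivAt f (a • ContinuousLinearMap.id ℝ ℂ + b • (conjCLE : ℂ →L[ℝ] ℂ)) z) :
    wdz f z = a := by
  simp only [wdz, hf.fderiv, add_apply, smul_apply,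
    ContinuousLinearMap.id_apply, smul_eq_mul, ContinuousLinearEquiv.coe_coe, conjCLE_apply,
    map_one, conj_I]
  linear_combination (b - a) / 2 * I_sq

lemma wdzbar_eq_of_hasFDerivAt
    (hf : HasFDerivAt f (a • ContinuousLinearMap.id ℝ ℂ + b • (conjCLE : ℂ →L[ℝ] ℂ)) z) :
    wdzbar f z = b := by
  simp only [wdzbar, hf.fderiv, add_apply, smul_apply,
    ContinuousLinearMap.id_apply, smul_eq_mul, ContinuousLinearEquiv.coe_coe, conjCLE_apply,
    map_one, conj_I]
  linear_combination (a - b) / 2 * I_sq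

lemma not_exists_dilatation_bound {s : Set ℂ} {l : Filter ℂ} [l.NeBot]
    (hs : s ∈ l) (h : Tendsto (fun z => ‖wdzbar f z‖ / ‖wdz f z‖) l (𝓝 1)) :
    ¬ ∃ K : ℝ, 1 ≤ K ∧ ∀ z ∈ s,
      ‖wdz f z‖ + ‖wdzbar f z‖ ≤ K * (‖wdz f z‖ - ‖wdzbar f z‖) := by
  rintro ⟨K, hK, hbound⟩
  have hlt : (K - 1) / (K + 1) < 1 := by rw [div_lt_one (by linarith)]; linarith
  obtain ⟨z, hratio, hz⟩ := ((h.eventually (lt_mem_nhds hlt)).and hs).exists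
  exact hratio.not_ge (div_le_of_add_le_mul_sub hK (norm_nonneg _) (hbound z hz))

end Wirtinger

lemma hasFDerivAt_pow_mul_conj_pow (m n : ℕ) (z : ℂ) :
    HasFDerivAt (fun w : ℂ => w ^ m * conj w ^ n)
      ((m * z ^ (m - 1) * conj z ^ n) • ContinuousLinearMap.id ℝ ℂ
        + (n * z ^ m * conj z ^ (n - 1)) • (conjCLE : ℂ →L[ℝ] ℂ)) z := by
  refine HasFDerivAt.congr_fderiv
    (((hasFDerivAt_id (𝕜 := ℝ) z).pow m).mul (conjCLE.hasFDerivAt.pow n)) ?_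
  ext h
  simp only [id_eq, ContinuousAlgEquiv.coeCLE_apply, conjCAE_apply, nsmul_eq_mul, add_apply,
    smul_apply, ContinuousLinearEquiv.coe_coe, smul_eq_mul, ContinuousLinearMap.id_apply]
  ring

noncomputable def exampleMap (w : ℂ) : ℂ := 3 * w * (‖w‖ : ℂ) ^ 2 - w * (‖w‖ : ℂ) ^ 8

lemma exampleMap_eq_pow_mul_conj_pow :
    exampleMap = fun w => 3 * (w ^ 2 * conj w ^ 1) - w ^ 5 * conj w ^ 4 := by
  funext w
  have h8 : (‖w‖ : ℂ) ^ 8 = (w * conj w) ^ 4 := by rw [mul_conj']; ring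
  rw [exampleMap, h8, ← mul_conj']
  ring

lemma hasFDerivAt_exampleMap (z : ℂ) :
    HasFDerivAt exampleMap
      (((‖z‖ ^ 2 * (6 - 5 * ‖z‖ ^ 6) : ℝ) : ℂ) • ContinuousLinearMap.id ℝ ℂ
        + (z ^ 2 * ((3 - 4 * ‖z‖ ^ 6 : ℝ) : ℂ)) • (conjCLE : ℂ →L[ℝ] ℂ)) z := by
  rw [exampleMap_eq_pow_mul_conj_pow]
  refine (((hasFDerivAt_pow_mul_conj_pow 2 1 z).const_mul 3).sub
    (hasFDerivAt_pow_mul_conj_pow 5 4 z)).congr_fderiv ?_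
  have h6 : (‖z‖ : ℂ) ^ 6 = (z * conj z) ^ 3 := by rw [mul_conj']; ring
  ext h
  simp only [Nat.cast_ofNat, Nat.add_one_sub_one, pow_one, Nat.cast_one, one_mul, tsub_self,
    pow_zero, mul_one, smul_add, sub_apply, add_apply, smul_apply, ContinuousLinearMap.id_apply,
    smul_eq_mul, ContinuousLinearEquiv.coe_coe, ContinuousAlgEquiv.coeCLE_apply, conjCAE_apply,
    ofReal_mul, ofReal_pow, ofReal_sub, ofReal_ofNat]
  rw [h6, ← mul_conj']
  ring

lemma norm_wdz_exampleMap (z : ℂ) : ‖wdz exampleMap z‖ = ‖z‖ ^ 2 * |6 - 5 * ‖z‖ ^ 6| := by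
  rw [wdz_eq_of_hasFDerivAt (hasFDerivAt_exampleMap z), norm_real, Real.norm_eq_abs, abs_mul,
    abs_of_nonneg (by positivity)]

lemma norm_wdzbar_exampleMap (z : ℂ) :
    ‖wdzbar exampleMap z‖ = ‖z‖ ^ 2 * |3 - 4 * ‖z‖ ^ 6| := by
  rw [wdzbar_eq_of_hasFDerivAt (hasFDerivAt_exampleMap z), norm_mul, norm_pow, norm_real,
    Real.norm_eq_abs]

lemma norm_wdzbar_div_norm_wdz_exampleMap {z : ℂ} (hz : z ≠ 0) :
    ‖wdzbar exampleMap z‖ / ‖wdz exampleMap z‖ = |3 - 4 * ‖z‖ ^ 6| / |6 - 5 * ‖z‖ ^ 6| := by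
  rw [norm_wdz_exampleMap, norm_wdzbar_exampleMap, mul_div_mul_left _ _ (by positivity)]

lemma tendsto_norm_wdzbar_div_norm_wdz_exampleMap :
    Tendsto (fun z => ‖wdzbar exampleMap z‖ / ‖wdz exampleMap z‖)
      (comap (‖·‖) (𝓝[<] 1)) (𝓝 1) := by
  have hcont : ContinuousAt (fun r : ℝ => |3 - 4 * r ^ 6| / |6 - 5 * r ^ 6|) 1 :=
    ContinuousAt.div (by fun_prop) (by fun_prop) (by norm_num)
  have hlim : Tendsto (fun r : ℝ => |3 - 4 * r ^ 6| / |6 - 5 * r ^ 6|) (𝓝[<] 1) (𝓝 1) := by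
    convert hcont.tendsto.mono_left nhdsWithin_le_nhds using 2
    norm_num
  refine (hlim.comp tendsto_comap).congr' ?_
  have hpos : (‖·‖ : ℂ → ℝ) ⁻¹' Ioi 0 ∈ comap (‖·‖) (𝓝[<] (1 : ℝ)) :=
    preimage_mem_comap (mem_nhdsWithin_of_mem_nhds (Ioi_mem_nhds zero_lt_one))
  filter_upwards [hpos] with z hz
  exact (norm_wdzbar_div_norm_wdz_exampleMap (norm_pos_iff.1 hz)).symm

/-- For f(z) = 3z|z|² − z|z|⁸, |f_{z̄}(z)|/|f_z(z)| → 1 as |z| → 1⁻; consequently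
    f is not K-quasiconformal for any K ≥ 1. -/
theorem example_map_not_quasiconformal :
    Filter.Tendsto
      (fun z : ℂ =>
        norm (wdzbar (fun w : ℂ => 3 * w * (norm w : ℂ) ^ 2 - w * (norm w : ℂ) ^ 8) z)
          / norm (wdz (fun w : ℂ => 3 * w * (norm w : ℂ) ^ 2 - w * (norm w : ℂ) ^ 8) z))
      (Filter.comap (fun z : ℂ => norm z) (nhdsWithin 1 (Set.Iio 1)))
      (nhds 1) ∧
    ¬ ∃ K : ℝ, 1 ≤ K ∧ ∀ z ∈ Metric.ball (0:ℂ) 1,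
      norm (wdz (fun w : ℂ => 3 * w * (norm w : ℂ) ^ 2 - w * (norm w : ℂ) ^ 8) z)
        + norm (wdzbar (fun w : ℂ => 3 * w * (norm w : ℂ) ^ 2 - w * (norm w : ℂ) ^ 8) z)
      ≤ K * (norm (wdz (fun w : ℂ => 3 * w * (norm w : ℂ) ^ 2 - w * (norm w : ℂ) ^ 8) z)
        - norm (wdzbar (fun w : ℂ => 3 * w * (norm w : ℂ) ^ 2 - w * (norm w : ℂ) ^ 8) z)) := by
  have := neBot_comap_norm_nhdsLT one_pos
  have hball : ball (0 : ℂ) 1 ∈ comap (‖·‖) (𝓝[<] (1 : ℝ)) :=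
    mem_of_superset (preimage_mem_comap self_mem_nhdsWithin) fun z hz => mem_ball_zero_iff.2 hz
  exact ⟨tendsto_norm_wdzbar_div_norm_wdz_exampleMap,
    not_exists_dilatation_bound hball tendsto_norm_wdzbar_div_norm_wdz_exampleMap⟩
end

section
/- Let f be a harmonic (K,K')-quasiconformal mapping of the unit disk, written f(z) = Σ_{n≥0} a_n zⁿ + Σ_{n≥1} b̄_n z̄ⁿ, and suppose the perimeter ℓ_f(1) = sup_{0<r<1} ∫₀^{2π} |∂_θ f(re^{iθ})| dθ is at most 2πR. Then for every n ≥ 1, |a_n| + |b_n| ≤ (√K' + KR)/n. -/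
open Complex Metric Set

/-!
The series converges at every point of the disc, so at every radius `s < 1` the trigonometric
terms `aₙ sⁿ e^{inθ} + b̄ₙ sⁿ e^{-inθ}` are bounded for each `θ`. A Cantor–Lebesgue argument (Baire
category, then integration against `e^{∓inθ}` on an interval) makes `(|aₙ| + |bₙ|) sⁿ` bounded, so
`h = Σ aₙ zⁿ` and `g = Σ bₙ zⁿ` are holomorphic on the disc and `f = h + ḡ`, whence `f_z = h'` and
`f_{z̄} = conj g'`. Cauchy's estimate for `h'` and `g'` on `|z| = r` gives
`2π n rⁿ⁻¹ (|aₙ| + |bₙ|) ≤ ∫ (|f_z| + |f_{z̄}|) dθ`, and the quasiconformality inequality bounds the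
integrand by `K |f_z - e^{-2iθ} f_{z̄}| + √K'`. Multiplying by `r`, the perimeter bound gives
`n rⁿ (|aₙ| + |bₙ|) ≤ K R + r √K'`; let `r → 1`.
-/

open ComplexConjugate Filter Topology MeasureTheory FormalMultilinearSeries NNReal
open scoped Real ENNReal

theorem exists_isOpen_forall_norm_le_of_forall_bddAbove {ι X E : Type*} [TopologicalSpace X]
    [BaireSpace X] [Nonempty X] [SeminormedAddGroup E] {F : ι → X → E}
    (hF : ∀ i, Continuous (F i)) (hbdd : ∀ x, BddAbove (range fun i => ‖F i x‖)) :
    ∃ U : Set X, IsOpen U ∧ U.Nonempty ∧ ∃ C, ∀ i, ∀ x ∈ U, ‖F i x‖ ≤ C := by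
  have hclosed (k : ℕ) : IsClosed {x | ∀ i, ‖F i x‖ ≤ k} := by
    simp only [ofPred_forall]
    exact isClosed_iInter fun i => isClosed_le (hF i).norm continuous_const
  have hcover : ⋃ k : ℕ, {x | ∀ i, ‖F i x‖ ≤ k} = univ := by
    refine eq_univ_of_forall fun x => ?_
    obtain ⟨C, hC⟩ := hbdd x
    obtain ⟨k, hk⟩ := exists_nat_ge C
    exact mem_iUnion.2 ⟨k, fun i => (hC ⟨i, rfl⟩).trans hk⟩
  obtain ⟨k, hk⟩ := nonempty_interior_of_iUnion_of_closed hclosed hcover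
  exact ⟨_, isOpen_interior, hk, k, fun i x hx => interior_subset hx i⟩

theorem norm_intervalIntegral_exp_mul_I_le {k : ℝ} (hk : k ≠ 0) (c d : ℝ) :
    ‖∫ θ in c..d, cexp (k * θ * I)‖ ≤ 2 / |k| := by
  have hkI : (k : ℂ) * I ≠ 0 := mul_ne_zero (ofReal_ne_zero.2 hk) I_ne_zero
  have hnorm (θ : ℝ) : ‖cexp (k * I * θ)‖ = 1 := by
    rw [show (k : ℂ) * I * θ = ↑(k * θ) * I by push_cast; ring, norm_exp_ofReal_mul_I]
  simp_rw [mul_right_comm _ _ I]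
  rw [integral_exp_mul_complex hkI, norm_div, norm_mul, norm_real, norm_I, mul_one,
    Real.norm_eq_abs]
  gcongr
  exact (norm_sub_le _ _).trans_eq (by rw [hnorm, hnorm]; norm_num)

theorem norm_mul_le_of_forall_norm_exp_add_le (α β : ℂ) {m C c d : ℝ} (hm : m ≠ 0) (hcd : c ≤ d)
    (h : ∀ θ ∈ Icc c d, ‖α * cexp (m * θ * I) + β * cexp (-m * θ * I)‖ ≤ C) :
    ‖α‖ * (d - c) ≤ C * (d - c) + ‖β‖ / |m| := by
  set t : ℝ → ℂ := fun θ => α * cexp (m * θ * I) + β * cexp (-m * θ * I)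
  have hint : ∫ θ in c..d, t θ * cexp (-m * θ * I)
      = α * (d - c) + β * ∫ θ in c..d, cexp (↑(-2 * m) * θ * I) := by
    have hpt (θ : ℝ) : t θ * cexp (-m * θ * I) = α + β * cexp (↑(-2 * m) * θ * I) := by
      rw [add_mul, mul_assoc, ← Complex.exp_add, mul_assoc β, ← Complex.exp_add]
      push_cast
      ring_nf
      simp
    simp_rw [hpt]
    rw [intervalIntegral.integral_add intervalIntegrable_const
      (Continuous.intervalIntegrable (by fun_prop) _ _), intervalIntegral.integral_const_mul]
    simp [mul_comm]
  have hlhs : ‖∫ θ in c..d, t θ * cexp (-m * θ * I)‖ ≤ C * (d - c) := by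
    refine (intervalIntegral.norm_integral_le_of_norm_le_const fun θ hθ => ?_).trans_eq
      (by rw [abs_of_nonneg (sub_nonneg.2 hcd)])
    have hexp : ‖cexp (-m * θ * I)‖ = 1 := by
      rw [show (-m : ℂ) * θ * I = ↑(-m * θ) * I by push_cast; ring, norm_exp_ofReal_mul_I]
    rw [norm_mul, hexp, mul_one]
    exact h θ (Ioc_subset_Icc_self (uIoc_of_le hcd ▸ hθ))
  have hosc := norm_intervalIntegral_exp_mul_I_le (mul_ne_zero (by norm_num : (-2 : ℝ) ≠ 0) hm)
    c d
  rw [abs_mul, abs_neg, abs_two] at hosc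
  calc ‖α‖ * (d - c) = ‖α * (d - c)‖ := by
        rw [norm_mul, ← ofReal_sub, norm_real, Real.norm_of_nonneg (sub_nonneg.2 hcd)]
    _ ≤ C * (d - c) + ‖β‖ * (2 / (2 * |m|)) := by
        rw [eq_sub_of_add_eq hint.symm]
        refine (norm_sub_le _ _).trans (add_le_add hlhs ?_)
        rw [norm_mul]
        gcongr
    _ = C * (d - c) + ‖β‖ / |m| := by
        field_simp

theorem exists_eventually_norm_add_norm_le_of_forall_bddAbove (α β : ℕ → ℂ)
    (h : ∀ θ : ℝ,
      BddAbove (range fun m : ℕ => ‖α m * cexp (m * θ * I) + β m * cexp (-m * θ * I)‖)) :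
    ∃ C, ∀ᶠ m in atTop, ‖α m‖ + ‖β m‖ ≤ C := by
  obtain ⟨U, hU, ⟨θ₀, hθ₀⟩, C, hC⟩ := exists_isOpen_forall_norm_le_of_forall_bddAbove
    (F := fun (m : ℕ) (θ : ℝ) => α m * cexp (m * θ * I) + β m * cexp (-m * θ * I))
    (fun m => by fun_prop) h
  obtain ⟨δ, hδ, hball⟩ := Metric.isOpen_iff.1 hU θ₀ hθ₀
  have hIcc : Icc (θ₀ - δ / 2) (θ₀ + δ / 2) ⊆ U := fun θ hθ =>
    hball (by rw [mem_ball, Real.dist_eq, abs_sub_lt_iff]; constructor <;> linarith [hθ.1, hθ.2])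
  have hcd : θ₀ - δ / 2 ≤ θ₀ + δ / 2 := by linarith
  refine ⟨4 * C, ?_⟩
  filter_upwards [tendsto_one_div_atTop_nhds_zero_nat.eventually (ge_mem_nhds (half_pos hδ)),
    eventually_ne_atTop 0] with m hmδ hm
  have hm' : (m : ℝ) ≠ 0 := Nat.cast_ne_zero.2 hm
  have hα := norm_mul_le_of_forall_norm_exp_add_le (α m) (β m) hm' hcd fun θ hθ => by
    simpa using hC m θ (hIcc hθ)
  have hβ := norm_mul_le_of_forall_norm_exp_add_le (β m) (α m) (neg_ne_zero.2 hm') hcd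
    fun θ hθ => by simpa [add_comm] using hC m θ (hIcc hθ)
  simp only [abs_neg, Nat.abs_cast, add_sub_sub_cancel, add_halves] at hα hβ
  rw [div_eq_mul_one_div ‖β m‖] at hα
  rw [div_eq_mul_one_div ‖α m‖] at hβ
  nlinarith [mul_le_mul_of_nonneg_left hmδ (norm_nonneg (α m)),
    mul_le_mul_of_nonneg_left hmδ (norm_nonneg (β m))]

theorem one_le_radius_ofScalars {c : ℕ → ℂ}
    (hc : ∀ s : ℝ≥0, (s : ℝ≥0∞) < 1 → ∃ C, ∀ᶠ m in atTop, ‖c m‖ * (s : ℝ) ^ m ≤ C) :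
    1 ≤ (ofScalars ℂ c).radius :=
  ENNReal.le_of_forall_nnreal_lt fun s hs =>
    let ⟨C, hC⟩ := hc s hs
    le_radius_of_eventually_le _ C (by simpa only [ofScalars_norm] using hC)

theorem one_le_radius_ofScalars_of_summable {a b : ℕ → ℂ}
    (hsum : ∀ z ∈ ball (0 : ℂ) 1, Summable fun n => a n * z ^ n + conj (b n) * conj z ^ n) :
    1 ≤ (ofScalars ℂ a).radius ∧ 1 ≤ (ofScalars ℂ b).radius := by
  suffices h : ∀ s : ℝ≥0, (s : ℝ≥0∞) < 1 → ∃ C, ∀ᶠ m in atTop,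
      ‖a m‖ * (s : ℝ) ^ m + ‖b m‖ * (s : ℝ) ^ m ≤ C by
    refine ⟨one_le_radius_ofScalars fun s hs => ?_, one_le_radius_ofScalars fun s hs => ?_⟩
    all_goals obtain ⟨C, hC⟩ := h s hs
    · exact ⟨C, hC.mono fun m hm => (le_add_of_nonneg_right (by positivity)).trans hm⟩
    · exact ⟨C, hC.mono fun m hm => (le_add_of_nonneg_left (by positivity)).trans hm⟩
  intro s hs
  have hs1 : (s : ℝ) < 1 := by exact_mod_cast hs
  have hterm (θ : ℝ) (m : ℕ) :
      a m * (s * cexp (θ * I)) ^ m + conj (b m) * conj (s * cexp (θ * I)) ^ m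
        = a m * (s : ℂ) ^ m * cexp (m * θ * I) + conj (b m) * (s : ℂ) ^ m * cexp (-m * θ * I) := by
    rw [map_mul, conj_ofReal, ← exp_conj, map_mul, conj_ofReal, conj_I, mul_pow, mul_pow,
      ← exp_nat_mul, ← exp_nat_mul]
    ring_nf
  obtain ⟨C, hC⟩ := exists_eventually_norm_add_norm_le_of_forall_bddAbove
    (fun m => a m * (s : ℂ) ^ m) (fun m => conj (b m) * (s : ℂ) ^ m) fun θ => by
      have hz : (s : ℂ) * cexp (θ * I) ∈ ball (0 : ℂ) 1 := by
        simpa [norm_exp_ofReal_mul_I] using hs1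
      simpa only [hterm] using ((hsum _ hz).tendsto_atTop_zero.norm).bddAbove_range
  refine ⟨C, hC.mono fun m hm => ?_⟩
  simpa using hm

theorem Metric.eball_one_eq_ball {α : Type*} [PseudoMetricSpace α] (x : α) :
    eball x 1 = ball x 1 := by
  rw [← ENNReal.coe_one, Metric.eball_coe, NNReal.coe_one]

theorem eq_add_conj_of_hasSum {h g : ℂ → ℂ} {a b : ℕ → ℂ} {R : ℝ≥0∞} {z w : ℂ}
    (hh : HasFPowerSeriesOnBall h (ofScalars ℂ a) 0 R)
    (hg : HasFPowerSeriesOnBall g (ofScalars ℂ b) 0 R) (hz : z ∈ eball 0 R)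
    (hw : HasSum (fun n => a n * z ^ n + conj (b n) * conj z ^ n) w) :
    w = h z + conj (g z) := by
  have hsum_h := hh.hasSum (y := z) (by simpa using hz)
  have hsum_g := (hg.hasSum (y := z) (by simpa using hz)).map (starRingEnd ℂ) continuous_conj
  simp only [ofScalars_apply_eq, smul_eq_mul, zero_add, Function.comp_def, map_mul,
    map_pow] at hsum_h hsum_g
  exact hw.unique (hsum_h.add hsum_g)

theorem hasFPowerSeriesOnBall_deriv_ofScalars {h : ℂ → ℂ} {c : ℕ → ℂ} {R : ℝ≥0∞}
    (hh : HasFPowerSeriesOnBall h (ofScalars ℂ c) 0 R) :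
    HasFPowerSeriesOnBall (deriv h) (ofScalars ℂ fun n => (n + 1) * c (n + 1)) 0 R := by
  convert! (ContinuousLinearMap.apply ℂ ℂ (1 : ℂ)).comp_hasFPowerSeriesOnBall hh.fderiv
  ext n
  simp

theorem two_pi_mul_norm_coeff_mul_pow_le_integral_norm_deriv {h : ℂ → ℂ} {c : ℕ → ℂ}
    {R : ℝ≥0∞} (hh : HasFPowerSeriesOnBall h (ofScalars ℂ c) 0 R) {r : ℝ} (hr : 0 < r)
    (hrR : ENNReal.ofReal r < R) (n : ℕ) :
    2 * π * ((n + 1) * ‖c (n + 1)‖ * r ^ n) ≤ ∫ θ in 0..2 * π, ‖deriv h (circleMap 0 r θ)‖ := by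
  lift r to ℝ≥0 using hr.le
  rw [ENNReal.ofReal_coe_nnreal] at hrR
  have hd := hasFPowerSeriesOnBall_deriv_ofScalars hh
  have hsub : closedBall (0 : ℂ) r ⊆ eball 0 R := fun z hz => by
    rw [mem_eball, edist_dist]
    exact (ENNReal.ofReal_le_of_le_toReal (by simpa using hz)).trans_lt hrR
  have hcauchy := (hd.differentiableOn.mono hsub).hasFPowerSeriesOnBall (show 0 < r from hr)
  have hcoeff := norm_cauchyPowerSeries_le (deriv h) 0 r n
  rw [← hd.hasFPowerSeriesAt.eq_formalMultilinearSeries hcauchy.hasFPowerSeriesAt,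
    ofScalars_norm] at hcoeff
  have hn : ‖(n : ℂ) + 1‖ = n + 1 := by exact_mod_cast Complex.norm_natCast (n + 1)
  rw [norm_mul, hn, abs_of_pos hr, inv_pow, ← div_eq_mul_inv,
    le_div_iff₀ (by positivity)] at hcoeff
  calc 2 * π * ((n + 1) * ‖c (n + 1)‖ * r ^ n)
      ≤ 2 * π * ((2 * π)⁻¹ * ∫ θ in 0..2 * π, ‖deriv h (circleMap 0 r θ)‖) := by gcongr
    _ = _ := by field_simp

theorem fderiv_apply_of_eventuallyEq_add_conj {f h g : ℂ → ℂ} {z : ℂ}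
    (hf : f =ᶠ[𝓝 z] fun w => h w + conj (g w)) (hh : DifferentiableAt ℂ h z)
    (hg : DifferentiableAt ℂ g z) (v : ℂ) :
    fderiv ℝ f z v = deriv h z * v + conj (deriv g z * v) := by
  have hderiv : HasFDerivAt (fun w => h w + conj (g w)) _ z :=
    (hh.hasDerivAt.hasFDerivAt.restrictScalars ℝ).add
      (conjCLE.hasFDerivAt.comp z (hg.hasDerivAt.hasFDerivAt.restrictScalars ℝ))
  rw [hf.fderiv_eq, hderiv.fderiv]
  simp [mul_comm]

theorem wdz_eq_deriv_of_eventuallyEq {f h g : ℂ → ℂ} {z : ℂ}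
    (hf : f =ᶠ[𝓝 z] fun w => h w + conj (g w)) (hh : DifferentiableAt ℂ h z)
    (hg : DifferentiableAt ℂ g z) : wdz f z = deriv h z := by
  simp only [wdz, fderiv_apply_of_eventuallyEq_add_conj hf hh hg, map_mul, conj_I, map_one]
  ring_nf
  simp only [I_sq]
  ring

theorem wdzbar_eq_conj_deriv_of_eventuallyEq {f h g : ℂ → ℂ} {z : ℂ}
    (hf : f =ᶠ[𝓝 z] fun w => h w + conj (g w)) (hh : DifferentiableAt ℂ h z)
    (hg : DifferentiableAt ℂ g z) : wdzbar f z = conj (deriv g z) := by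
  simp only [wdzbar, fderiv_apply_of_eventuallyEq_add_conj hf hh hg, map_mul, conj_I, map_one]
  ring_nf
  simp only [I_sq]
  ring

theorem eqOn_wdz_deriv {f h g : ℂ → ℂ} {U : Set ℂ} (hU : IsOpen U)
    (hh : DifferentiableOn ℂ h U) (hg : DifferentiableOn ℂ g U)
    (hf : EqOn f (fun w => h w + conj (g w)) U) : EqOn (wdz f) (deriv h) U := fun _ hz =>
  wdz_eq_deriv_of_eventuallyEq (eventually_of_mem (hU.mem_nhds hz) hf)
    (hh.differentiableAt (hU.mem_nhds hz)) (hg.differentiableAt (hU.mem_nhds hz))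

theorem eqOn_wdzbar_conj_deriv {f h g : ℂ → ℂ} {U : Set ℂ} (hU : IsOpen U)
    (hh : DifferentiableOn ℂ h U) (hg : DifferentiableOn ℂ g U)
    (hf : EqOn f (fun w => h w + conj (g w)) U) :
    EqOn (wdzbar f) (fun z => conj (deriv g z)) U := fun _ hz =>
  wdzbar_eq_conj_deriv_of_eventuallyEq (eventually_of_mem (hU.mem_nhds hz) hf)
    (hh.differentiableAt (hU.mem_nhds hz)) (hg.differentiableAt (hU.mem_nhds hz))

theorem continuousOn_wdz {f h g : ℂ → ℂ} {U : Set ℂ} (hU : IsOpen U)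
    (hh : DifferentiableOn ℂ h U) (hg : DifferentiableOn ℂ g U)
    (hf : EqOn f (fun w => h w + conj (g w)) U) : ContinuousOn (wdz f) U :=
  (hh.deriv hU).continuousOn.congr (eqOn_wdz_deriv hU hh hg hf)

theorem continuousOn_wdzbar {f h g : ℂ → ℂ} {U : Set ℂ} (hU : IsOpen U)
    (hh : DifferentiableOn ℂ h U) (hg : DifferentiableOn ℂ g U)
    (hf : EqOn f (fun w => h w + conj (g w)) U) : ContinuousOn (wdzbar f) U :=
  (continuous_conj.comp_continuousOn (hg.deriv hU).continuousOn).congr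
    (eqOn_wdzbar_conj_deriv hU hh hg hf)

theorem le_add_sqrt_of_sq_le_mul_add {s u c : ℝ} (hs : 0 ≤ s) (hu : 0 ≤ u)
    (h : s ^ 2 ≤ u * s + c) : s ≤ u + √c := by
  by_contra! hlt
  have hsc : √c < s := by linarith
  have hc : c ≤ s * √c := by
    rcases le_total c 0 with hc | hc
    · exact hc.trans (by positivity)
    · nlinarith [Real.mul_self_sqrt hc, Real.sqrt_nonneg c]
  nlinarith [mul_lt_mul_of_pos_left hlt (hsc.trans_le' (Real.sqrt_nonneg c))]

theorem norm_add_norm_le_of_sq_le {A B e : ℂ} {K K' : ℝ} (hK : 0 ≤ K) (he : ‖e‖ = 1)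
    (h : (‖A‖ + ‖B‖) ^ 2 ≤ K * (‖A‖ ^ 2 - ‖B‖ ^ 2) + K') :
    ‖A‖ + ‖B‖ ≤ K * ‖A - e * B‖ + √K' := by
  have hsub : ‖A‖ - ‖B‖ ≤ ‖A - e * B‖ := by
    simpa [he] using norm_sub_norm_le A (e * B)
  refine le_add_sqrt_of_sq_le_mul_add (by positivity) (by positivity) (h.trans ?_)
  nlinarith [mul_le_mul_of_nonneg_left hsub (add_nonneg (norm_nonneg A) (norm_nonneg B)),
    norm_nonneg A, norm_nonneg B]

theorem integral_norm_add_norm_le_of_sq_le {A B : ℝ → ℂ} (hA : Continuous A) (hB : Continuous B)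
    {K K' : ℝ} (hK : 0 ≤ K)
    (h : ∀ θ, (‖A θ‖ + ‖B θ‖) ^ 2 ≤ K * (‖A θ‖ ^ 2 - ‖B θ‖ ^ 2) + K') :
    ∫ θ in 0..2 * π, (‖A θ‖ + ‖B θ‖)
      ≤ K * (∫ θ in 0..2 * π, ‖A θ - cexp (-2 * θ * I) * B θ‖) + 2 * π * √K' := by
  have hexp (θ : ℝ) : ‖cexp (-2 * θ * I)‖ = 1 := by
    rw [show (-2 : ℂ) * θ * I = ↑(-2 * θ) * I by push_cast; ring, norm_exp_ofReal_mul_I]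
  have hint :
      IntervalIntegrable (fun θ : ℝ => K * ‖A θ - cexp (-2 * θ * I) * B θ‖) volume 0 (2 * π) :=
    Continuous.intervalIntegrable (by fun_prop) _ _
  calc ∫ θ in 0..2 * π, (‖A θ‖ + ‖B θ‖)
      ≤ ∫ θ in 0..2 * π, (K * ‖A θ - cexp (-2 * θ * I) * B θ‖ + √K') :=
        intervalIntegral.integral_mono_on (by positivity)
          (Continuous.intervalIntegrable (by fun_prop) _ _) (hint.add intervalIntegrable_const)
          fun θ _ => norm_add_norm_le_of_sq_le hK (hexp θ) (h θ)
    _ = _ := by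
        rw [intervalIntegral.integral_add hint intervalIntegrable_const,
          intervalIntegral.integral_const_mul, intervalIntegral.integral_const, sub_zero,
          smul_eq_mul]

theorem le_of_forall_mul_pow_le {x y : ℝ} {n : ℕ} (h : ∀ r ∈ Ioo (0 : ℝ) 1, x * r ^ n ≤ y) :
    x ≤ y := by
  have hlim : Tendsto (fun r : ℝ => x * r ^ n) (𝓝[<] 1) (𝓝 x) := by
    simpa using ((by fun_prop : Continuous fun r : ℝ => x * r ^ n).tendsto 1).mono_left
      nhdsWithin_le_nhds
  exact le_of_tendsto hlim (by filter_upwards [Ioo_mem_nhdsLT zero_lt_one] with r hr using h r hr)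

theorem succ_mul_norm_add_norm_mul_pow_le {f h g : ℂ → ℂ} {a b : ℕ → ℂ} {K K' R r : ℝ}
    (hh : HasFPowerSeriesOnBall h (ofScalars ℂ a) 0 1)
    (hg : HasFPowerSeriesOnBall g (ofScalars ℂ b) 0 1)
    (hf : EqOn f (fun w => h w + conj (g w)) (ball 0 1)) (hK : 0 ≤ K)
    (hqc : ∀ z ∈ ball (0 : ℂ) 1,
      (‖wdz f z‖ + ‖wdzbar f z‖) ^ 2 ≤ K * (‖wdz f z‖ ^ 2 - ‖wdzbar f z‖ ^ 2) + K')
    (hr : r ∈ Ioo (0 : ℝ) 1)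
    (hper : r * ∫ θ in (0 : ℝ)..2 * π,
      ‖wdz f (r * cexp (θ * I)) - cexp (-2 * θ * I) * wdzbar f (r * cexp (θ * I))‖ ≤ 2 * π * R)
    (n : ℕ) :
    (n + 1) * (‖a (n + 1)‖ + ‖b (n + 1)‖) * r ^ (n + 1) ≤ √K' + K * R := by
  simp only [← circleMap_zero] at hper
  set T := ∫ θ in (0 : ℝ)..2 * π,
    ‖wdz f (circleMap 0 r θ) - cexp (-2 * θ * I) * wdzbar f (circleMap 0 r θ)‖
  have hz (θ : ℝ) : circleMap 0 r θ ∈ ball (0 : ℂ) 1 := by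
    simpa [abs_of_pos hr.1] using hr.2
  have hhd : DifferentiableOn ℂ h (ball 0 1) := eball_one_eq_ball (0 : ℂ) ▸ hh.differentiableOn
  have hgd : DifferentiableOn ℂ g (ball 0 1) := eball_one_eq_ball (0 : ℂ) ▸ hg.differentiableOn
  have hwdz (θ : ℝ) := eqOn_wdz_deriv isOpen_ball hhd hgd hf (hz θ)
  have hwdzbar (θ : ℝ) := eqOn_wdzbar_conj_deriv isOpen_ball hhd hgd hf (hz θ)
  have hcA : Continuous fun θ => wdz f (circleMap 0 r θ) :=
    (continuousOn_wdz isOpen_ball hhd hgd hf).comp_continuous (continuous_circleMap 0 r) hz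
  have hcB : Continuous fun θ => wdzbar f (circleMap 0 r θ) :=
    (continuousOn_wdzbar isOpen_ball hhd hgd hf).comp_continuous (continuous_circleMap 0 r) hz
  have hint := integral_norm_add_norm_le_of_sq_le hcA hcB hK fun θ => hqc _ (hz θ)
  rw [intervalIntegral.integral_add (hcA.norm.intervalIntegrable _ _)
    (hcB.norm.intervalIntegrable _ _)] at hint
  have hA : 2 * π * ((n + 1) * ‖a (n + 1)‖ * r ^ n)
      ≤ ∫ θ in (0 : ℝ)..2 * π, ‖wdz f (circleMap 0 r θ)‖ := by
    simpa only [hwdz] using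
      two_pi_mul_norm_coeff_mul_pow_le_integral_norm_deriv hh hr.1 (by simpa using hr.2) n
  have hB : 2 * π * ((n + 1) * ‖b (n + 1)‖ * r ^ n)
      ≤ ∫ θ in (0 : ℝ)..2 * π, ‖wdzbar f (circleMap 0 r θ)‖ := by
    simpa only [hwdzbar, norm_conj] using
      two_pi_mul_norm_coeff_mul_pow_le_integral_norm_deriv hg hr.1 (by simpa using hr.2) n
  have hsqrt : r * √K' ≤ √K' := mul_le_of_le_one_left (Real.sqrt_nonneg _) hr.2.le
  calc (n + 1) * (‖a (n + 1)‖ + ‖b (n + 1)‖) * r ^ (n + 1)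
      = r * (2 * π * ((n + 1) * ‖a (n + 1)‖ * r ^ n) + 2 * π * ((n + 1) * ‖b (n + 1)‖ * r ^ n))
        / (2 * π) := by field_simp; ring
    _ ≤ r * (K * T + 2 * π * √K') / (2 * π) :=
        div_le_div_of_nonneg_right (mul_le_mul_of_nonneg_left (by linarith) hr.1.le) (by positivity)
    _ = (K * (r * T) + 2 * π * (r * √K')) / (2 * π) := by ring
    _ ≤ (K * (2 * π * R) + 2 * π * √K') / (2 * π) := by gcongr
    _ = √K' + K * R := by field_simp; ring

theorem coeff_bound_perimeter_general (f : ℂ → ℂ) (a b : ℕ → ℂ) (K K' R : ℝ)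
    (hK : 1 ≤ K)
    (hrep : ∀ z ∈ Metric.ball (0:ℂ) 1,
      HasSum (fun n : ℕ => a n * z ^ n + (starRingEnd ℂ) (b n) * ((starRingEnd ℂ) z) ^ n) (f z))
    (hqc : ∀ z ∈ Metric.ball (0:ℂ) 1,
      (‖wdz f z‖ + ‖wdzbar f z‖) ^ 2
        ≤ K * ((‖wdz f z‖) ^ 2 - (‖wdzbar f z‖) ^ 2) + K')
    (hper : ∀ r ∈ Set.Ioo (0:ℝ) 1,
      r * ∫ θ in (0:ℝ)..(2 * Real.pi),
        ‖wdz f (r * Complex.exp (θ * Complex.I))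
          - Complex.exp (-2 * θ * Complex.I) * wdzbar f (r * Complex.exp (θ * Complex.I))‖
      ≤ 2 * Real.pi * R) :
    ∀ n : ℕ, 1 ≤ n →
      ‖a n‖ + ‖b n‖ ≤ (Real.sqrt K' + K * R) / n := by
  intro n hn
  obtain ⟨ha, hb⟩ := one_le_radius_ofScalars_of_summable fun z hz => (hrep z hz).summable
  have hh := ((ofScalars ℂ a).hasFPowerSeriesOnBall (zero_lt_one.trans_le ha)).mono one_pos ha
  have hg := ((ofScalars ℂ b).hasFPowerSeriesOnBall (zero_lt_one.trans_le hb)).mono one_pos hb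
  have hf : EqOn f (fun w => (ofScalars ℂ a).sum w + conj ((ofScalars ℂ b).sum w)) (ball 0 1) :=
    fun z hz => eq_add_conj_of_hasSum hh hg (by rwa [eball_one_eq_ball]) (hrep z hz)
  obtain ⟨m, rfl⟩ : ∃ m, n = m + 1 := ⟨n - 1, by omega⟩
  rw [le_div_iff₀ (by positivity), mul_comm]
  exact le_of_forall_mul_pow_le fun r hr => by
    simpa using succ_mul_norm_add_norm_mul_pow_le hh hg hf (by linarith) hqc hr (hper r hr) m

/-- Coefficient estimate for harmonic (K,K')-quasiconformal mappings of 𝔻 onto a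
    Jordan domain with rectifiable boundary of length 2πR:
    |aₙ| + |bₙ| ≤ (√K' + KR)/n. -/
theorem coeff_bound_perimeter (f : ℂ → ℂ) (a b : ℕ → ℂ) (K K' R : ℝ)
    (hK : 1 ≤ K) (hK' : 0 ≤ K') (hR : 0 < R)
    (hreg : ContDiffOn ℝ 1 f (Metric.ball 0 1))
    (hb0 : b 0 = 0)
    (hrep : ∀ z ∈ Metric.ball (0:ℂ) 1,
      HasSum (fun n : ℕ => a n * z ^ n + (starRingEnd ℂ) (b n) * ((starRingEnd ℂ) z) ^ n) (f z))
    (hinj : Set.InjOn f (Metric.ball 0 1))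
    (hqc : ∀ z ∈ Metric.ball (0:ℂ) 1,
      (‖wdz f z‖ + ‖wdzbar f z‖) ^ 2
        ≤ K * ((‖wdz f z‖) ^ 2 - (‖wdzbar f z‖) ^ 2) + K')
    (hper : ∀ r ∈ Set.Ioo (0:ℝ) 1,
      r * ∫ θ in (0:ℝ)..(2 * Real.pi),
        ‖wdz f (r * Complex.exp (θ * Complex.I))
          - Complex.exp (-2 * θ * Complex.I) * wdzbar f (r * Complex.exp (θ * Complex.I))‖
      ≤ 2 * Real.pi * R) :
    ∀ n : ℕ, 1 ≤ n →
      ‖a n‖ + ‖b n‖ ≤ (Real.sqrt K' + K * R) / n :=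
  coeff_bound_perimeter_general f a b K K' R hK hrep hqc hper
end

section
/- Let f be a harmonic mapping of the unit disk satisfying |f_z(z)| ≤ R/(1−|z|²) for all z ∈ 𝔻, and suppose ‖D_f(z)‖² ≤ K J_f(z) + K' with K ≥ 1, K' ≥ 0. Then ‖D_f(z)‖ ≤ (R + (−R + √(K' + KK' + K²R²))/(1+K)) · 1/(1−|z|²) for all z ∈ 𝔻. -/
open Complex Metric Set

/-!
At each point put `a = |f_z|`, `b = |f_{z̄}|`. Multiplying `(a + b)² ≤ K (a² − b²) + K'` by `1 + K`
and completing the square gives `((1 + K) b + a)² ≤ K² a² + (1 + K) K'`, so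
`(1 + K)(a + b) ≤ K a + √((1 + K) K' + K² a²)`. The right-hand side is increasing in `a`, and
inserting `a ≤ R t` with `t = 1 / (1 − |z|²) ≥ 1` yields the bound, since
`√((1 + K) K' + K² R² t²) ≤ t √((1 + K) K' + K² R²)`.
-/

namespace DistortionBound

theorem add_mul_le_sqrt_of_sq_add_le {K K' a b : ℝ} (hK : 0 ≤ 1 + K)
    (hq : (a + b) ^ 2 ≤ K * (a ^ 2 - b ^ 2) + K') :
    (1 + K) * b + a ≤ √((1 + K) * K' + K ^ 2 * a ^ 2) :=
  Real.le_sqrt_of_sq_le <| by nlinarith [mul_le_mul_of_nonneg_left hq hK]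

theorem sqrt_add_mul_sq_le {c x t : ℝ} (hc : 0 ≤ c) (ht : 1 ≤ t) :
    √(c + (x * t) ^ 2) ≤ √(c + x ^ 2) * t := by
  rw [Real.sqrt_le_iff, mul_pow √(c + x ^ 2) t, Real.sq_sqrt (by positivity)]
  have ht2 : 1 ≤ t ^ 2 := one_le_pow₀ ht
  exact ⟨by positivity, by nlinarith [mul_nonneg hc (sub_nonneg.2 ht2)]⟩

theorem add_le_of_sq_add_le {K K' R a b t : ℝ} (hK : 0 ≤ K) (hK' : 0 ≤ K')
    (ha : 0 ≤ a) (haR : a ≤ R * t) (ht : 1 ≤ t)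
    (hq : (a + b) ^ 2 ≤ K * (a ^ 2 - b ^ 2) + K') :
    a + b ≤ (R + (-R + √(K' + K * K' + K ^ 2 * R ^ 2)) / (1 + K)) * t := by
  have hK1 : 0 < 1 + K := by linarith
  have hc : 0 ≤ (1 + K) * K' := by positivity
  have hsq : K ^ 2 * a ^ 2 ≤ (K * (R * t)) ^ 2 := by
    rw [mul_pow]; gcongr
  refine le_of_mul_le_mul_left ?_ hK1
  calc (1 + K) * (a + b) = K * a + ((1 + K) * b + a) := by ring
      _ ≤ K * (R * t) + √((1 + K) * K' + K ^ 2 * a ^ 2) := by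
        gcongr; exact add_mul_le_sqrt_of_sq_add_le hK1.le hq
      _ ≤ K * (R * t) + √((1 + K) * K' + (K * (R * t)) ^ 2) := by gcongr
      _ ≤ K * (R * t) + √((1 + K) * K' + (K * R) ^ 2) * t := by
        gcongr; rw [← mul_assoc]; exact sqrt_add_mul_sq_le hc ht
      _ = (1 + K) * ((R + (-R + √(K' + K * K' + K ^ 2 * R ^ 2)) / (1 + K)) * t) := by
        field_simp
        ring_nf

end DistortionBound

theorem distortion_bound_general (f : ℂ → ℂ) (K K' R : ℝ)
    (hK : 1 ≤ K) (hK' : 0 ≤ K')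
    (hfz : ∀ z ∈ Metric.ball (0:ℂ) 1,
      ‖wdz f z‖ ≤ R / (1 - (‖z‖) ^ 2))
    (hqc : ∀ z ∈ Metric.ball (0:ℂ) 1,
      (‖wdz f z‖ + ‖wdzbar f z‖) ^ 2
        ≤ K * ((‖wdz f z‖) ^ 2 - (‖wdzbar f z‖) ^ 2) + K') :
    ∀ z ∈ Metric.ball (0:ℂ) 1,
      ‖wdz f z‖ + ‖wdzbar f z‖
        ≤ (R + (-R + Real.sqrt (K' + K * K' + K ^ 2 * R ^ 2)) / (1 + K))
            * (1 / (1 - (‖z‖) ^ 2)) := by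
  intro z hz
  have hz1 : ‖z‖ ^ 2 < 1 := by simpa using hz
  have hd : 0 < 1 - ‖z‖ ^ 2 := by linarith
  have ht : 1 ≤ 1 / (1 - ‖z‖ ^ 2) := by
    rw [le_div_iff₀ hd]; linarith [sq_nonneg ‖z‖]
  exact DistortionBound.add_le_of_sq_add_le (by linarith) hK' (norm_nonneg _)
    (div_eq_mul_one_div R _ ▸ hfz z hz) ht (hqc z hz)

/-- Distortion estimate: if f is harmonic in 𝔻 with |f_z(z)| ≤ R/(1−|z|²) and
    ‖D_f‖² ≤ K J_f + K', then
    ‖D_f(z)‖ ≤ (R + (−R + √(K' + KK' + K²R²))/(1+K)) / (1−|z|²). -/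
theorem distortion_bound (f : ℂ → ℂ) (K K' R : ℝ)
    (hK : 1 ≤ K) (hK' : 0 ≤ K') (hR : 0 < R)
    (hreg : ContDiffOn ℝ 2 f (Metric.ball 0 1))
    (hharm : ∀ z ∈ Metric.ball (0:ℂ) 1,
      fderiv ℝ (fun w => fderiv ℝ f w 1) z 1
        + fderiv ℝ (fun w => fderiv ℝ f w Complex.I) z Complex.I = 0)
    (hfz : ∀ z ∈ Metric.ball (0:ℂ) 1,
      ‖wdz f z‖ ≤ R / (1 - (‖z‖) ^ 2))
    (hqc : ∀ z ∈ Metric.ball (0:ℂ) 1,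
      (‖wdz f z‖ + ‖wdzbar f z‖) ^ 2
        ≤ K * ((‖wdz f z‖) ^ 2 - (‖wdzbar f z‖) ^ 2) + K') :
    ∀ z ∈ Metric.ball (0:ℂ) 1,
      ‖wdz f z‖ + ‖wdzbar f z‖
        ≤ (R + (-R + Real.sqrt (K' + K * K' + K ^ 2 * R ^ 2)) / (1 + K))
            * (1 / (1 - (‖z‖) ^ 2)) :=
  distortion_bound_general f K K' R hK hK' hfz hqc
end

section
/- Let f be a harmonic (K,K')-quasiconformal mapping of the unit disk, f(z) = Σ_{n≥0} a_n zⁿ + Σ_{n≥1} b̄_n z̄ⁿ, with finite radial length ℓ*_f(1) = sup_{θ∈[0,2π]} sup_{0≤r<1} ∫₀^r |f_z(ρe^{iθ}) + e^{−2iθ} f_{z̄}(ρe^{iθ})| dρ < ∞. Then for every n ≥ 1, |a_n| + |b_n| ≤ √K' + K ℓ*_f(1). -/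
open Complex Metric Set

/-!
Write `f = g + conj h` with `g = Σ aₙ zⁿ` and `h = Σ bₙ zⁿ`. Both series converge on the disk: the
series of `f` converges at every `s e^{iθ}`, and a Baire category argument in `θ` turns this into
a bound on `(|aₙ| + |bₙ|) sⁿ`. Then `f_z = g'` and `f_{z̄} = conj h'`. Pick a unimodular `c` with
`|aₙ + c bₙ| = |aₙ| + |bₙ|`. On the ray of angle `θ`,
`|(g + c h)'| ≤ ‖D_f‖ ≤ K l(D_f) + √K' ≤ K |f_z + e^{-2iθ} f_{z̄}| + √K'`, so integrating along the
ray bounds `|(g + c h)(r e^{iθ}) - (g + c h)(0)|` by `√K' + K ℓ*_f(1)`. Cauchy's estimate for the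
`n`-th coefficient of `g + c h` on the circle of radius `r` then gives the bound as `r → 1`.
-/

open Real ComplexConjugate Filter Topology FormalMultilinearSeries

lemma add_le_mul_abs_sub_add_sqrt {K K' x y : ℝ} (hK : 0 ≤ K)
    (h : (x + y) ^ 2 ≤ K * (x ^ 2 - y ^ 2) + K') :
    x + y ≤ K * |x - y| + √K' := by
  by_cases hle : x + y ≤ K * |x - y|
  · linarith [Real.sqrt_nonneg K']
  push Not at hle
  have hKd : 0 ≤ K * |x - y| := by positivity
  have hsq : (x + y - K * |x - y|) ^ 2 ≤ K' := by
    nlinarith [mul_le_mul_of_nonneg_left (le_abs_self (x - y)) (hKd.trans hle.le),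
      mul_le_mul_of_nonneg_left hle.le hKd]
  linarith [(Real.le_sqrt' (by linarith)).mpr hsq]

lemma abs_norm_sub_norm_le_norm_add_mul {u v c : ℂ} (hc : ‖c‖ = 1) :
    |‖u‖ - ‖v‖| ≤ ‖u + c * v‖ := by
  simpa [norm_mul, hc] using abs_norm_sub_norm_le u (-(c * v))

lemma exists_norm_add_mul_exp_eq (a c : ℂ) :
    ∃ φ : ℝ, ‖a + c * exp (φ * I)‖ = ‖a‖ + ‖c‖ := by
  refine ⟨a.arg - c.arg, ?_⟩
  have hc : c * exp ((a.arg - c.arg : ℝ) * I) = ‖c‖ * exp (a.arg * I) := by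
    calc c * exp ((a.arg - c.arg : ℝ) * I)
        = ‖c‖ * exp (c.arg * I) * exp ((a.arg - c.arg : ℝ) * I) := by
          rw [norm_mul_exp_arg_mul_I]
      _ = ‖c‖ * exp (a.arg * I) := by
          rw [mul_assoc, ← Complex.exp_add]; push_cast; ring_nf
  calc ‖a + c * exp ((a.arg - c.arg : ℝ) * I)‖
      = ‖((‖a‖ + ‖c‖ : ℝ) : ℂ) * exp (a.arg * I)‖ := by
        rw [hc, ofReal_add, add_mul, norm_mul_exp_arg_mul_I]
    _ = ‖a‖ + ‖c‖ := by
        rw [norm_mul, norm_exp_ofReal_mul_I, mul_one, norm_real,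
          Real.norm_of_nonneg (by positivity)]

lemma exists_mem_Ico_exp_mul_eq {t : ℝ} (ht : 0 < t) (x φ : ℝ) :
    ∃ θ ∈ Ico x (x + 2 * π / t), exp ((t * θ : ℝ) * I) = exp (φ * I) := by
  set ψ := toIcoMod two_pi_pos (t * x) φ
  have hψ : ψ ∈ Ico (t * x) (t * x + 2 * π) := toIcoMod_mem_Ico two_pi_pos (t * x) φ
  refine ⟨ψ / t, ⟨?_, ?_⟩, ?_⟩
  · rw [le_div_iff₀ ht]; linarith [hψ.1]
  · rw [div_lt_iff₀ ht, add_mul, div_mul_cancel₀ _ ht.ne']; linarith [hψ.2]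
  · rw [mul_div_cancel₀ _ ht.ne', Complex.exp_eq_exp_iff_exists_int]
    refine ⟨-toIcoDiv two_pi_pos (t * x) φ, ?_⟩
    have hdiv := self_sub_toIcoMod two_pi_pos (t * x) φ
    rw [zsmul_eq_mul] at hdiv
    rw [show ψ = φ - toIcoDiv two_pi_pos (t * x) φ * (2 * π) by linarith]
    push_cast; ring

lemma exists_eventually_norm_add_norm_le {a c : ℕ → ℂ}
    (h : ∀ θ : ℝ, BddAbove (range fun n : ℕ => ‖a n + c n * exp ((n * θ : ℝ) * I)‖)) :
    ∃ M : ℝ, ∀ᶠ n in atTop, ‖a n‖ + ‖c n‖ ≤ M := by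
  set E : ℕ → Set ℝ := fun m => ⋂ n, {θ | ‖a n + c n * exp ((n * θ : ℝ) * I)‖ ≤ m}
  have hclosed : ∀ m, IsClosed (E m) := fun m =>
    isClosed_iInter fun n => isClosed_le (by fun_prop) continuous_const
  have hcover : ⋃ m, E m = univ := by
    refine eq_univ_of_forall fun θ => ?_
    obtain ⟨M, hM⟩ := h θ
    exact mem_iUnion.2 ⟨⌈M⌉₊, mem_iInter.2 fun n =>
      (hM (mem_range_self n)).trans (Nat.le_ceil M)⟩
  obtain ⟨m, θ₀, hθ₀⟩ := nonempty_interior_of_iUnion_of_closed hclosed hcover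
  obtain ⟨ε, hε, hball⟩ := Metric.isOpen_iff.mp isOpen_interior θ₀ hθ₀
  refine ⟨m, ?_⟩
  filter_upwards [eventually_ge_atTop ⌈2 * π / ε⌉₊] with n hn
  have hnε : 2 * π / ε ≤ n := Nat.ceil_le.mp hn
  have hn0 : 0 < (n : ℝ) := (by positivity : 0 < 2 * π / ε).trans_le hnε
  obtain ⟨φ, hφ⟩ := exists_norm_add_mul_exp_eq (a n) (c n)
  -- some `θ` within `2π/n ≤ ε` of `θ₀` aligns the phases of the two terms
  obtain ⟨θ, hθ, hexp⟩ := exists_mem_Ico_exp_mul_eq hn0 θ₀ φ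
  have hθε : θ ∈ ball θ₀ ε := by
    have : 2 * π / n ≤ ε := by
      rw [div_le_iff₀ hn0]; linarith [(div_le_iff₀ hε).mp hnε]
    rw [mem_ball, Real.dist_eq, abs_lt]
    constructor <;> linarith [hθ.1, hθ.2]
  rw [← hφ, ← hexp]
  exact mem_iInter.1 (interior_subset (hball hθε)) n

lemma eball_zero_one : eball (0 : ℂ) 1 = ball 0 1 := by
  simpa using eball_coe (x := (0 : ℂ)) (ε := 1)

lemma norm_mul_pow_add_mul_conj_pow (α γ : ℂ) (s θ : ℝ) (n : ℕ) :
    ‖α * ((s : ℂ) * exp ((-θ / 2 : ℝ) * I)) ^ n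
        + γ * conj ((s : ℂ) * exp ((-θ / 2 : ℝ) * I)) ^ n‖
      = ‖α * s ^ n + γ * s ^ n * exp ((n * θ : ℝ) * I)‖ := by
  have hconj : conj ((s : ℂ) * exp ((-θ / 2 : ℝ) * I)) = s * exp ((θ / 2 : ℝ) * I) := by
    rw [map_mul, conj_ofReal, ← exp_conj, map_mul, conj_ofReal, conj_I]
    push_cast; ring_nf
  have hsplit : α * ((s : ℂ) * exp ((-θ / 2 : ℝ) * I)) ^ n + γ * (s * exp ((θ / 2 : ℝ) * I)) ^ n
      = exp ((-(n * θ / 2) : ℝ) * I) * (α * s ^ n + γ * s ^ n * exp ((n * θ : ℝ) * I)) := by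
    have e1 : Complex.exp (n * ((-θ / 2 : ℝ) * I)) = Complex.exp ((-(n * θ / 2) : ℝ) * I) := by
      push_cast; ring_nf
    have e2 : Complex.exp (n * ((θ / 2 : ℝ) * I))
        = Complex.exp ((-(n * θ / 2) : ℝ) * I) * Complex.exp ((n * θ : ℝ) * I) := by
      rw [← Complex.exp_add]; push_cast; ring_nf
    simp only [mul_pow, ← Complex.exp_nat_mul, e1, e2]
    ring
  rw [hconj, hsplit, norm_mul, norm_exp_ofReal_mul_I, one_mul]

lemma hasFPowerSeriesOnBall_ofScalars_of_summable {a b : ℕ → ℂ}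
    (h : ∀ z ∈ ball (0 : ℂ) 1, Summable fun n => a n * z ^ n + conj (b n) * conj z ^ n) :
    HasFPowerSeriesOnBall (ofScalars ℂ a).sum (ofScalars ℂ a) 0 1 ∧
      HasFPowerSeriesOnBall (ofScalars ℂ b).sum (ofScalars ℂ b) 0 1 := by
  have hbound : ∀ s : NNReal, (s : ENNReal) < 1 →
      ∃ M : ℝ, ∀ᶠ n in atTop, (‖a n‖ + ‖b n‖) * s ^ n ≤ M := by
    intro s hs
    obtain ⟨M, hM⟩ := exists_eventually_norm_add_norm_le
      (a := fun n => a n * (s : ℂ) ^ n) (c := fun n => conj (b n) * (s : ℂ) ^ n) fun θ => by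
        have hz : (s : ℂ) * exp ((-θ / 2 : ℝ) * I) ∈ ball (0 : ℂ) 1 := by
          rw [mem_ball_zero_iff, norm_mul, norm_exp_ofReal_mul_I, mul_one]
          simpa using hs
        simpa only [norm_mul_pow_add_mul_conj_pow] using
          (h _ hz).tendsto_atTop_zero.norm.bddAbove_range
    refine ⟨M, hM.mono fun n hn => ?_⟩
    simpa [norm_mul, add_mul] using hn
  have hradius : ∀ c : ℕ → ℂ, (∀ n, ‖c n‖ ≤ ‖a n‖ + ‖b n‖) →
      HasFPowerSeriesOnBall (ofScalars ℂ c).sum (ofScalars ℂ c) 0 1 := by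
    intro c hc
    have hc1 : 1 ≤ (ofScalars ℂ c).radius := ENNReal.le_of_forall_nnreal_lt fun s hs => by
      obtain ⟨M, hM⟩ := hbound s hs
      refine le_radius_of_eventually_le _ M (hM.mono fun n hn => ?_)
      rw [ofScalars_norm]
      exact (mul_le_mul_of_nonneg_right (hc n) (by positivity)).trans hn
    exact ((ofScalars ℂ c).hasFPowerSeriesOnBall (one_pos.trans_le hc1)).mono one_pos hc1
  exact ⟨hradius a fun n => le_add_of_nonneg_right (norm_nonneg _),
    hradius b fun n => le_add_of_nonneg_left (norm_nonneg _)⟩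

lemma eqOn_add_conj_of_hasSum {f g h : ℂ → ℂ} {a b : ℕ → ℂ}
    (hrep : ∀ z ∈ ball (0 : ℂ) 1,
      HasSum (fun n => a n * z ^ n + conj (b n) * conj z ^ n) (f z))
    (hg : HasFPowerSeriesOnBall g (ofScalars ℂ a) 0 1)
    (hh : HasFPowerSeriesOnBall h (ofScalars ℂ b) 0 1) :
    EqOn f (fun z => g z + conj (h z)) (ball 0 1) := by
  intro z hz
  have hz' : z ∈ eball (0 : ℂ) 1 := eball_zero_one ▸ hz
  have hgz := hg.hasSum hz'
  have hhz := (hh.hasSum hz').star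
  simp only [zero_add, ofScalars_apply_eq, smul_eq_mul, star_mul', star_pow] at hgz hhz
  exact (hrep z hz).unique (hgz.add hhz)

lemma wdz_wdzbar_of_eventuallyEq_add_conj {f g h : ℂ → ℂ} {z : ℂ}
    (hg : DifferentiableAt ℂ g z) (hh : DifferentiableAt ℂ h z)
    (hf : f =ᶠ[𝓝 z] fun w => g w + conj (h w)) :
    wdz f z = deriv g z ∧ wdzbar f z = conj (deriv h z) := by
  have hfd : HasFDerivAt f (deriv g z • (1 : ℂ →L[ℝ] ℂ)
      + conjCLE.toContinuousLinearMap.comp (deriv h z • (1 : ℂ →L[ℝ] ℂ))) z :=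
    (hg.hasDerivAt.complexToReal_fderiv.add
      (conjCLE.hasFDerivAt.comp z hh.hasDerivAt.complexToReal_fderiv)).congr_of_eventuallyEq hf
  have h1 : fderiv ℝ f z 1 = deriv g z + conj (deriv h z) := by
    simp [hfd.fderiv]
  have hI : fderiv ℝ f z I = deriv g z * I - conj (deriv h z) * I := by
    simp [hfd.fderiv, sub_eq_add_neg]
  constructor
  · rw [wdz, h1, hI]
    linear_combination (conj (deriv h z) - deriv g z) / 2 * I_sq
  · rw [wdzbar, h1, hI]
    linear_combination (deriv g z - conj (deriv h z)) / 2 * I_sq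

lemma HasFPowerSeriesOnBall.norm_coeff_mul_pow_le {E : Type*} [NormedAddCommGroup E]
    [NormedSpace ℂ E] [CompleteSpace E] {G : ℂ → E} {p : FormalMultilinearSeries ℂ ℂ E}
    {c : ℂ} {R : ENNReal} {r C : ℝ} (hG : HasFPowerSeriesOnBall G p c R) (hr : 0 < r)
    (hrR : ENNReal.ofReal r < R) {n : ℕ} (hn : n ≠ 0)
    (hC : ∀ θ : ℝ, ‖G (circleMap c r θ) - G c‖ ≤ C) :
    ‖p n‖ * r ^ n ≤ C := by
  -- subtracting `G c` only changes the constant coefficient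
  have hG₀ : HasFPowerSeriesOnBall (fun z => G z - G c)
      (p - constFormalMultilinearSeries ℂ ℂ (G c)) c R :=
    hG.sub (hasFPowerSeriesOnBall_const.mono hG.r_pos le_top)
  have hdiff : DifferentiableOn ℂ (fun z => G z - G c) (closedBall c r) :=
    hG₀.differentiableOn.mono fun z hz => by
      rw [mem_eball, edist_dist]; exact (ENNReal.ofReal_le_ofReal hz).trans_lt hrR
  have hcauchy : HasFPowerSeriesAt (fun z => G z - G c)
      (cauchyPowerSeries (fun z => G z - G c) c r) c :=
    (hdiff.hasFPowerSeriesOnBall (R := ⟨r, hr.le⟩) (by exact_mod_cast hr)).hasFPowerSeriesAt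
  have hp : p n = cauchyPowerSeries (fun z => G z - G c) c r n := by
    rw [← hG₀.hasFPowerSeriesAt.eq_formalMultilinearSeries hcauchy]
    simp [constFormalMultilinearSeries_apply_of_nonzero hn]
  have hint : ∫ θ in 0..2 * π, ‖G (circleMap c r θ) - G c‖ ≤ C * (2 * π) := by
    refine (le_abs_self _).trans ?_
    simpa [abs_of_pos two_pi_pos] using intervalIntegral.norm_integral_le_of_norm_le_const
      (a := 0) (b := 2 * π) (f := fun θ => ‖G (circleMap c r θ) - G c‖) fun θ _ => by
        simpa using hC θ
  calc ‖p n‖ * r ^ n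
      ≤ ((2 * π)⁻¹ * ∫ θ in 0..2 * π, ‖G (circleMap c r θ) - G c‖) * |r|⁻¹ ^ n * r ^ n := by
        rw [hp]; gcongr; exact norm_cauchyPowerSeries_le _ _ _ _
    _ ≤ C := by
        rw [abs_of_pos hr, mul_assoc, ← mul_pow, inv_mul_cancel₀ hr.ne', one_pow, mul_one]
        rw [inv_mul_le_iff₀ two_pi_pos]; linarith

section Ray

variable {E : Type*} [NormedAddCommGroup E] {u : ℂ} {r : ℝ}

lemma ofReal_mul_mem_ball (hu : ‖u‖ = 1) (hr : r < 1) {ρ : ℝ} (hρ : ρ ∈ Icc 0 r) :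
    (ρ : ℂ) * u ∈ ball (0 : ℂ) 1 := by
  rw [mem_ball_zero_iff, norm_mul, hu, mul_one, norm_real, Real.norm_of_nonneg hρ.1]
  exact hρ.2.trans_lt hr

lemma ContinuousOn.intervalIntegrable_comp_ofReal_mul {F : ℂ → E}
    (hF : ContinuousOn F (ball 0 1)) (hu : ‖u‖ = 1) (hr0 : 0 ≤ r) (hr1 : r < 1) :
    IntervalIntegrable (fun ρ : ℝ => F (ρ * u)) MeasureTheory.volume 0 r := by
  refine ContinuousOn.intervalIntegrable ?_
  rw [uIcc_of_le hr0]
  exact hF.comp (by fun_prop : Continuous fun ρ : ℝ => (ρ : ℂ) * u).continuousOn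
    fun ρ hρ => ofReal_mul_mem_ball hu hr1 hρ

lemma norm_sub_le_integral_norm_deriv [NormedSpace ℂ E] [CompleteSpace E] {G : ℂ → E}
    (hG : AnalyticOnNhd ℂ G (ball 0 1)) (hu : ‖u‖ = 1) (hr0 : 0 ≤ r) (hr1 : r < 1) :
    ‖G (r * u) - G 0‖ ≤ ∫ ρ in 0..r, ‖deriv G (ρ * u)‖ := by
  have hderiv : ∀ ρ ∈ uIcc 0 r,
      HasDerivAt (fun ρ : ℝ => G (ρ * u)) (u • deriv G (ρ * u)) ρ := by
    intro ρ hρ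
    rw [uIcc_of_le hr0] at hρ
    have hGd := (hG _ (ofReal_mul_mem_ball hu hr1 hρ)).differentiableAt.hasDerivAt
    have hray : HasDerivAt (fun ρ : ℝ => (ρ : ℂ) * u) u ρ := by
      simpa using (hasDerivAt_id ρ).ofReal_comp.mul_const u
    exact hGd.scomp ρ hray
  have hcont : ContinuousOn (fun w => u • deriv G w) (ball 0 1) :=
    continuousOn_const.smul hG.deriv.continuousOn
  calc ‖G (r * u) - G 0‖ = ‖∫ ρ in 0..r, u • deriv G (ρ * u)‖ := by
        rw [intervalIntegral.integral_eq_sub_of_hasDerivAt hderiv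
          (hcont.intervalIntegrable_comp_ofReal_mul hu hr0 hr1)]
        simp
    _ ≤ ∫ ρ in 0..r, ‖u • deriv G (ρ * u)‖ := intervalIntegral.norm_integral_le_integral_norm hr0
    _ = ∫ ρ in 0..r, ‖deriv G (ρ * u)‖ := by simp only [norm_smul, hu, one_mul]

end Ray

section Decomposition

variable {f g h : ℂ → ℂ} (hg : AnalyticOnNhd ℂ g (ball 0 1))
  (hh : AnalyticOnNhd ℂ h (ball 0 1)) (hf : EqOn f (fun z => g z + conj (h z)) (ball 0 1))
include hg hh hf

lemma wdz_wdzbar_of_eqOn_add_conj {w : ℂ} (hw : w ∈ ball (0 : ℂ) 1) :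
    wdz f w = deriv g w ∧ wdzbar f w = conj (deriv h w) :=
  wdz_wdzbar_of_eventuallyEq_add_conj (hg w hw).differentiableAt (hh w hw).differentiableAt
    (hf.eventuallyEq_of_mem (isOpen_ball.mem_nhds hw))

lemma continuousOn_wdz_of_eqOn_add_conj : ContinuousOn (wdz f) (ball 0 1) :=
  hg.deriv.continuousOn.congr fun _ hw => (wdz_wdzbar_of_eqOn_add_conj hg hh hf hw).1

lemma continuousOn_wdzbar_of_eqOn_add_conj : ContinuousOn (wdzbar f) (ball 0 1) :=
  (continuous_conj.comp_continuousOn hh.deriv.continuousOn).congr fun _ hw =>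
    (wdz_wdzbar_of_eqOn_add_conj hg hh hf hw).2

lemma norm_deriv_add_smul_le {c : ℂ} (hc : ‖c‖ = 1) {w : ℂ} (hw : w ∈ ball (0 : ℂ) 1) :
    ‖deriv (g + c • h) w‖ ≤ ‖wdz f w‖ + ‖wdzbar f w‖ := by
  obtain ⟨hwdz, hwdzbar⟩ := wdz_wdzbar_of_eqOn_add_conj hg hh hf hw
  rw [deriv_add (hg w hw).differentiableAt ((hh w hw).differentiableAt.const_smul c),
    deriv_const_smul _ (hh w hw).differentiableAt, hwdz, hwdzbar, norm_conj]
  simpa [norm_smul, hc] using norm_add_le (deriv g w) (c • deriv h w)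

end Decomposition

section Quasiconformal

variable {f : ℂ → ℂ} {K K' L : ℝ} (hK : 0 ≤ K)
  (hqc : ∀ z ∈ ball (0 : ℂ) 1,
    (‖wdz f z‖ + ‖wdzbar f z‖) ^ 2 ≤ K * (‖wdz f z‖ ^ 2 - ‖wdzbar f z‖ ^ 2) + K')
  (hrad : ∀ θ : ℝ, ∀ r ∈ Ico (0 : ℝ) 1,
    ∫ ρ in (0 : ℝ)..r, ‖wdz f (ρ * exp (θ * I))
      + exp (-2 * θ * I) * wdzbar f (ρ * exp (θ * I))‖ ≤ L)
include hK hqc hrad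

lemma integral_norm_wdz_add_norm_wdzbar_le
    (hwdz : ContinuousOn (wdz f) (ball 0 1)) (hwdzbar : ContinuousOn (wdzbar f) (ball 0 1))
    (θ : ℝ) {r : ℝ} (hr0 : 0 ≤ r) (hr1 : r < 1) :
    ∫ ρ in (0 : ℝ)..r, (‖wdz f (ρ * exp (θ * I))‖ + ‖wdzbar f (ρ * exp (θ * I))‖)
      ≤ √K' + K * L := by
  have hu : ‖exp (θ * I)‖ = 1 := norm_exp_ofReal_mul_I θ
  have hc : ‖exp (-2 * θ * I)‖ = 1 := by
    simpa using norm_exp_ofReal_mul_I (-2 * θ)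
  -- the quasiconformality inequality in the form `‖D_f‖ ≤ K l(D_f) + √K'`
  have hpt : ∀ w ∈ ball (0 : ℂ) 1, ‖wdz f w‖ + ‖wdzbar f w‖
      ≤ √K' + K * ‖wdz f w + exp (-2 * θ * I) * wdzbar f w‖ := fun w hw => by
    linarith [add_le_mul_abs_sub_add_sqrt hK (hqc w hw), mul_le_mul_of_nonneg_left
      (abs_norm_sub_norm_le_norm_add_mul (u := wdz f w) (v := wdzbar f w) hc) hK]
  have hint : ContinuousOn (fun w => ‖wdz f w + exp (-2 * θ * I) * wdzbar f w‖) (ball 0 1) :=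
    (hwdz.add (continuousOn_const.mul hwdzbar)).norm
  calc ∫ ρ in (0 : ℝ)..r, (‖wdz f (ρ * exp (θ * I))‖ + ‖wdzbar f (ρ * exp (θ * I))‖)
      ≤ ∫ ρ in (0 : ℝ)..r, (√K' + K * ‖wdz f (ρ * exp (θ * I))
          + exp (-2 * θ * I) * wdzbar f (ρ * exp (θ * I))‖) :=
        intervalIntegral.integral_mono_on hr0
          ((hwdz.norm.add hwdzbar.norm).intervalIntegrable_comp_ofReal_mul hu hr0 hr1)
          (intervalIntegrable_const.add
            ((hint.intervalIntegrable_comp_ofReal_mul hu hr0 hr1).const_mul K))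
          fun ρ hρ => hpt _ (ofReal_mul_mem_ball hu hr1 hρ)
    _ = √K' * r + K * ∫ ρ in (0 : ℝ)..r, ‖wdz f (ρ * exp (θ * I))
          + exp (-2 * θ * I) * wdzbar f (ρ * exp (θ * I))‖ := by
        rw [intervalIntegral.integral_add intervalIntegrable_const
          ((hint.intervalIntegrable_comp_ofReal_mul hu hr0 hr1).const_mul K),
          intervalIntegral.integral_const, intervalIntegral.integral_const_mul]
        simp [mul_comm]
    _ ≤ √K' + K * L := by
        gcongr
        · exact mul_le_of_le_one_right (Real.sqrt_nonneg K') hr1.le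
        · exact hrad θ r ⟨hr0, hr1⟩

lemma norm_add_norm_mul_pow_le {g h : ℂ → ℂ} {a b : ℕ → ℂ}
    (hga : HasFPowerSeriesOnBall g (ofScalars ℂ a) 0 1)
    (hhb : HasFPowerSeriesOnBall h (ofScalars ℂ b) 0 1)
    (hf : EqOn f (fun z => g z + conj (h z)) (ball 0 1))
    {n : ℕ} (hn : n ≠ 0) {r : ℝ} (hr0 : 0 < r) (hr1 : r < 1) :
    (‖a n‖ + ‖b n‖) * r ^ n ≤ √K' + K * L := by
  have hg := eball_zero_one ▸ hga.analyticOnNhd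
  have hh := eball_zero_one ▸ hhb.analyticOnNhd
  -- `g + c • h` has coefficients `a n + c * b n`, and `c` aligns their phases
  obtain ⟨φ, hφ⟩ := exists_norm_add_mul_exp_eq (a n) (b n)
  set c := exp (φ * I)
  have hc : ‖c‖ = 1 := norm_exp_ofReal_mul_I φ
  have hG := hga.add (hhb.const_smul (c := c))
  have hcoeff : ‖a n + b n * c‖ = ‖(ofScalars ℂ a + c • ofScalars ℂ b) n‖ := by
    rw [← ofScalars_smul, ← ofScalars_add, ofScalars_norm]
    simp [mul_comm]
  rw [← hφ, hcoeff]
  refine hG.norm_coeff_mul_pow_le hr0 (by simpa using hr1) hn fun θ => ?_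
  have hGan : AnalyticOnNhd ℂ (g + c • h) (ball 0 1) := eball_zero_one ▸ hG.analyticOnNhd
  rw [circleMap_zero]
  have hu : ‖exp (θ * I)‖ = 1 := norm_exp_ofReal_mul_I θ
  calc ‖(g + c • h) (r * exp (θ * I)) - (g + c • h) 0‖
      ≤ ∫ ρ in (0 : ℝ)..r, ‖deriv (g + c • h) (ρ * exp (θ * I))‖ :=
        norm_sub_le_integral_norm_deriv hGan hu hr0.le hr1
    _ ≤ ∫ ρ in (0 : ℝ)..r, (‖wdz f (ρ * exp (θ * I))‖ + ‖wdzbar f (ρ * exp (θ * I))‖) := by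
        refine intervalIntegral.integral_mono_on hr0.le ?_ ?_ fun ρ hρ =>
          norm_deriv_add_smul_le hg hh hf hc (ofReal_mul_mem_ball hu hr1 hρ)
        · exact hGan.deriv.continuousOn.norm.intervalIntegrable_comp_ofReal_mul hu hr0.le hr1
        · exact ((continuousOn_wdz_of_eqOn_add_conj hg hh hf).norm.add
            (continuousOn_wdzbar_of_eqOn_add_conj hg hh hf).norm).intervalIntegrable_comp_ofReal_mul
            hu hr0.le hr1
    _ ≤ √K' + K * L :=
        integral_norm_wdz_add_norm_wdzbar_le hK hqc hrad
          (continuousOn_wdz_of_eqOn_add_conj hg hh hf)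
          (continuousOn_wdzbar_of_eqOn_add_conj hg hh hf) θ hr0.le hr1

end Quasiconformal

theorem coeff_bound_radial_length_general (f : ℂ → ℂ) (a b : ℕ → ℂ) (K K' L : ℝ)
    (hK : 1 ≤ K)
    (hrep : ∀ z ∈ Metric.ball (0:ℂ) 1,
      HasSum (fun n : ℕ => a n * z ^ n + (starRingEnd ℂ) (b n) * ((starRingEnd ℂ) z) ^ n) (f z))
    (hqc : ∀ z ∈ Metric.ball (0:ℂ) 1,
      (‖(wdz f z)‖ + ‖(wdzbar f z)‖) ^ 2
        ≤ K * ((‖(wdz f z)‖) ^ 2 - (‖(wdzbar f z)‖) ^ 2) + K')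
    (hrad : ∀ θ : ℝ, ∀ r ∈ Set.Ico (0:ℝ) 1,
      ∫ ρ in (0:ℝ)..r,
        ‖(wdz f (ρ * Complex.exp (θ * Complex.I))
          + Complex.exp (-2 * θ * Complex.I) * wdzbar f (ρ * Complex.exp (θ * Complex.I)))‖
      ≤ L) :
    ∀ n : ℕ, 1 ≤ n →
      ‖(a n)‖ + ‖(b n)‖ ≤ Real.sqrt K' + K * L := by
  intro n hn
  obtain ⟨hga, hhb⟩ :=
    hasFPowerSeriesOnBall_ofScalars_of_summable fun z hz => (hrep z hz).summable
  have hbound : ∀ r ∈ Ioo (0 : ℝ) 1, (‖a n‖ + ‖b n‖) * r ^ n ≤ √K' + K * L :=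
    fun r hr => norm_add_norm_mul_pow_le (zero_le_one.trans hK) hqc hrad hga hhb
      (eqOn_add_conj_of_hasSum hrep hga hhb) (Nat.one_le_iff_ne_zero.mp hn) hr.1 hr.2
  have hlim : Tendsto (fun r : ℝ => (‖a n‖ + ‖b n‖) * r ^ n) (𝓝[<] 1)
      (𝓝 ((‖a n‖ + ‖b n‖) * 1 ^ n)) :=
    (Continuous.tendsto (by fun_prop) 1).mono_left nhdsWithin_le_nhds
  simpa using le_of_tendsto hlim (eventually_of_mem (Ioo_mem_nhdsLT zero_lt_one) hbound)

/-- Coefficient estimate for harmonic (K,K')-quasiconformal mappings with finite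
    radial length L = ℓ*_f(1): |aₙ| + |bₙ| ≤ √K' + K L. -/
theorem coeff_bound_radial_length (f : ℂ → ℂ) (a b : ℕ → ℂ) (K K' L : ℝ)
    (hK : 1 ≤ K) (hK' : 0 ≤ K') (hL : 0 ≤ L)
    (hreg : ContDiffOn ℝ 1 f (Metric.ball 0 1))
    (hb0 : b 0 = 0)
    (hrep : ∀ z ∈ Metric.ball (0:ℂ) 1,
      HasSum (fun n : ℕ => a n * z ^ n + (starRingEnd ℂ) (b n) * ((starRingEnd ℂ) z) ^ n) (f z))
    (hinj : Set.InjOn f (Metric.ball 0 1))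
    (hqc : ∀ z ∈ Metric.ball (0:ℂ) 1,
      (‖(wdz f z)‖ + ‖(wdzbar f z)‖) ^ 2
        ≤ K * ((‖(wdz f z)‖) ^ 2 - (‖(wdzbar f z)‖) ^ 2) + K')
    (hrad : ∀ θ : ℝ, ∀ r ∈ Set.Ico (0:ℝ) 1,
      ∫ ρ in (0:ℝ)..r,
        ‖(wdz f (ρ * Complex.exp (θ * Complex.I))
          + Complex.exp (-2 * θ * Complex.I) * wdzbar f (ρ * Complex.exp (θ * Complex.I)))‖
      ≤ L) :
    ∀ n : ℕ, 1 ≤ n →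
      ‖(a n)‖ + ‖(b n)‖ ≤ Real.sqrt K' + K * L :=
  coeff_bound_radial_length_general f a b K K' L hK hrep hqc hrad
end

section
/- Beardon-type lemma: let φ be subharmonic on the unit disk, and suppose A(r) := sup_{θ∈[0,2π]} ∫₀^r φ(ρe^{iθ}) dρ ≤ 1 for all r ∈ [0,1). Then A(r) ≤ r for all r ∈ [0,1). -/
/-!
Fix `r < s < 1` and let `g z = ∫₀¹ φ (t z) dt` be the radial average of `φ`. Integrating over
`t ∈ [0, 1]` the sub-mean-value inequalities of `φ` on the circles of centre `t z` and radius `t ρ`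
shows that `g` again has the sub-mean-value property, so `g` obeys the maximum principle on the
closed disk of radius `s`. On its boundary `g = s⁻¹ ∫₀ˢ φ ≤ 1 / s`, hence
`r⁻¹ ∫₀ʳ φ (ρ e^{iθ}) dρ = g (r e^{iθ}) ≤ 1 / s`, and letting `s → 1` gives the bound `r`.
-/

open scoped Pointwise

open Metric Complex Real Set Filter Topology MeasureTheory intervalIntegral

def SubMeanValueOn (f : ℂ → ℝ) (U : Set ℂ) : Prop :=
  ∀ z ∈ U, ∀ ρ : ℝ, 0 < ρ → closedBall z ρ ⊆ U → f z ≤ circleAverage f z ρ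

namespace SubMeanValueOn

variable {f g : ℂ → ℝ} {U V : Set ℂ}

theorem mono (hf : SubMeanValueOn f U) (hVU : V ⊆ U) : SubMeanValueOn f V :=
  fun z hz ρ hρ hball => hf z (hVU hz) ρ hρ (hball.trans hVU)

theorem congr (hf : SubMeanValueOn f U) (hfg : EqOn f g U) : SubMeanValueOn g U := by
  intro z hz ρ hρ hball
  have hsphere : EqOn f g (sphere z |ρ|) := by
    rw [abs_of_pos hρ]
    exact hfg.mono (sphere_subset_closedBall.trans hball)
  rw [← hfg hz, ← circleAverage_congr_sphere hsphere]
  exact hf z hz ρ hρ hball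

end SubMeanValueOn

theorem circleAverage_lt_of_le_of_lt {f : ℂ → ℝ} {c : ℂ} {R a η : ℝ}
    (hf : ContinuousOn f (sphere c |R|)) (hle : ∀ w ∈ sphere c |R|, f w ≤ a)
    (hlt : f (circleMap c R η) < a) : circleAverage f c R < a := by
  rw [circleAverage_eq_integral_add η, smul_eq_mul, inv_mul_lt_iff₀ two_pi_pos]
  have hcont : Continuous fun θ => f (circleMap c R (θ + η)) :=
    hf.comp_continuous (by fun_prop) fun θ => circleMap_mem_sphere' c R _
  have := integral_lt_integral_of_continuousOn_of_le_of_exists_lt two_pi_pos hcont.continuousOn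
    continuousOn_const (fun θ _ => hle _ (circleMap_mem_sphere' c R _))
    ⟨0, ⟨le_rfl, two_pi_pos.le⟩, by simpa using hlt⟩
  simpa [mul_comm] using this

theorem dist_circleMap_arg_sub (z c : ℂ) {ρ : ℝ} (hρ : 0 ≤ ρ) :
    dist (circleMap z ρ (arg (z - c))) c = dist z c + ρ := by
  have hpolar : z - c = ‖z - c‖ * exp (arg (z - c) * I) := (norm_mul_exp_arg_mul_I _).symm
  rw [dist_eq_norm, dist_eq_norm, circleMap, add_sub_right_comm]
  nth_rw 1 [hpolar]
  rw [← add_mul, ← ofReal_add, norm_mul, norm_exp_ofReal_mul_I, mul_one, norm_real,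
    Real.norm_of_nonneg (by positivity)]

theorem SubMeanValueOn.le_of_forall_sphere_le {g : ℂ → ℝ} {c : ℂ} {s a : ℝ}
    (hg : ContinuousOn g (closedBall c s)) (hsub : SubMeanValueOn g (ball c s))
    (hbd : ∀ w ∈ sphere c s, g w ≤ a) : ∀ z ∈ closedBall c s, g z ≤ a := by
  rcases (closedBall c s).eq_empty_or_nonempty with hempty | hne
  · simp [hempty]
  obtain ⟨z₁, hz₁, hmax⟩ := (isCompact_closedBall c s).exists_isMaxOn hne hg
  suffices g z₁ ≤ a from fun z hz => (hmax hz).trans this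
  -- among the maximum points, take one farthest from `c`
  set K := closedBall c s ∩ g ⁻¹' {g z₁}
  have hK : IsCompact K := (isCompact_closedBall c s).of_isClosed_subset
    (hg.preimage_isClosed_of_isClosed isClosed_closedBall isClosed_singleton) inter_subset_left
  have hdist : Continuous fun z => dist z c := continuous_id.dist continuous_const
  obtain ⟨z₀, ⟨hz₀, hgz₀⟩, hfar⟩ := hK.exists_isMaxOn ⟨z₁, hz₁, rfl⟩ hdist.continuousOn
  rw [mem_preimage, mem_singleton_iff] at hgz₀
  rcases (mem_closedBall.1 hz₀).eq_or_lt with hsphere | hinterior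
  · exact hgz₀ ▸ hbd z₀ hsphere
  exfalso
  set ρ := (s - dist z₀ c) / 2
  have hρ : 0 < ρ := by simp only [ρ]; linarith
  have hball : closedBall z₀ ρ ⊆ ball c s := closedBall_subset_ball' (by simp only [ρ]; linarith)
  set w := circleMap z₀ ρ (arg (z₀ - c))
  have hw : dist w c = dist z₀ c + ρ := dist_circleMap_arg_sub z₀ c hρ.le
  have hwK : w ∈ closedBall c s := mem_closedBall.2 (by simp only [ρ] at hw ⊢; linarith)
  have hgw : g w < g z₁ := by
    refine (hmax hwK).lt_of_ne fun h => ?_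
    have : dist w c ≤ dist z₀ c := hfar ⟨hwK, h⟩
    linarith
  have hcircle : sphere z₀ |ρ| ⊆ closedBall c s := by
    rw [abs_of_pos hρ]; exact sphere_subset_closedBall.trans (hball.trans ball_subset_closedBall)
  have := circleAverage_lt_of_le_of_lt (hg.mono hcircle) (fun v hv => hmax (hcircle hv)) hgw
  linarith [hsub z₀ (mem_ball.2 hinterior) ρ hρ hball]

noncomputable def radialAverage (f : ℂ → ℝ) (z : ℂ) : ℝ := ∫ t in (0:ℝ)..1, f (t * z)

section radialAverage

variable {f g : ℂ → ℝ} {U : Set ℂ}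

theorem continuous_radialAverage (hf : Continuous f) : Continuous (radialAverage f) :=
  continuous_parametric_intervalIntegral_of_continuous' (by fun_prop) 0 1

theorem radialAverage_ofReal_mul (f : ℂ → ℝ) (u : ℂ) {r : ℝ} (hr : r ≠ 0) :
    radialAverage f (r * u) = r⁻¹ * ∫ ρ in (0:ℝ)..r, f (ρ * u) := by
  have := integral_comp_mul_right (fun ρ : ℝ => f (ρ * u)) (a := 0) (b := 1) hr
  simp only [zero_mul, one_mul, ofReal_mul, smul_eq_mul] at this
  simp only [radialAverage, ← this, mul_assoc]

theorem radialAverage_eqOn (hU : StarConvex ℝ 0 U) (hfg : EqOn f g U) :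
    EqOn (radialAverage f) (radialAverage g) U := by
  intro z hz
  refine integral_congr fun t ht => ?_
  rw [uIcc_of_le zero_le_one] at ht
  simpa [real_smul] using hfg (hU.smul_mem hz ht.1 ht.2)

theorem circleAverage_radialAverage (hf : Continuous f) (z : ℂ) (ρ : ℝ) :
    circleAverage (radialAverage f) z ρ = ∫ t in (0:ℝ)..1, circleAverage f (t * z) (t * ρ) := by
  have hscale (t θ : ℝ) : circleMap (t * z) (t * ρ) θ = t * circleMap z ρ θ := by
    simp only [circleMap, ofReal_mul]; ring
  simp only [circleAverage, radialAverage, hscale, intervalIntegral.integral_smul]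
  rw [intervalIntegral_intervalIntegral_swap]
  exact (Continuous.continuousOn (by simp only [circleMap]; fun_prop)).integrableOn_compact
    (isCompact_uIcc.prod isCompact_uIcc) |>.mono_set (prod_mono uIoc_subset_uIcc uIoc_subset_uIcc)

theorem subMeanValueOn_radialAverage (hf : Continuous f) (hU : StarConvex ℝ 0 U)
    (hsub : SubMeanValueOn f U) : SubMeanValueOn (radialAverage f) U := by
  intro z hz ρ hρ hball
  rw [circleAverage_radialAverage hf]
  have hcirc : Continuous fun t : ℝ => circleAverage f (t * z) (t * ρ) := by
    simp only [circleAverage, circleMap]; fun_prop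
  refine integral_mono_on zero_le_one ((hf.comp (by fun_prop)).intervalIntegrable _ _)
    (hcirc.intervalIntegrable _ _) fun t ⟨ht0, ht1⟩ => ?_
  rcases ht0.eq_or_lt with rfl | htpos
  · simp [circleAverage_const_on_circle]
  have hsmul : closedBall (t * z) (t * ρ) = t • closedBall z ρ := by
    rw [smul_closedBall _ _ hρ.le, real_smul, Real.norm_of_nonneg ht0]
  refine hsub _ (by simpa [real_smul] using hU.smul_mem hz ht0 ht1) _ (by positivity) ?_
  rw [hsmul]
  rintro _ ⟨v, hv, rfl⟩
  exact hU.smul_mem (hball hv) ht0 ht1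

end radialAverage

theorem SubMeanValueOn.radial_integral_le {φ : ℂ → ℝ} {s r M : ℝ}
    (hsub : SubMeanValueOn φ (ball 0 s)) (hcont : ContinuousOn φ (closedBall 0 s))
    (hM : ∀ θ : ℝ, ∫ ρ in (0:ℝ)..s, φ (ρ * exp (θ * I)) ≤ M) (hr : 0 ≤ r) (hrs : r ≤ s) (θ : ℝ) :
    ∫ ρ in (0:ℝ)..r, φ (ρ * exp (θ * I)) ≤ r / s * M := by
  rcases hr.eq_or_lt with rfl | hrpos
  · simp
  have hs : 0 < s := hrpos.trans_le hrs
  -- the maximum principle needs a function continuous up to the boundary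
  obtain ⟨Ψ, hΨ⟩ := ContinuousMap.exists_restrict_eq isClosed_closedBall ⟨_, hcont.domRestrict⟩
  have hΨφ : EqOn Ψ φ (closedBall 0 s) := fun z hz => DFunLike.congr_fun hΨ ⟨z, hz⟩
  have hrad : EqOn (radialAverage Ψ) (radialAverage φ) (closedBall 0 s) :=
    radialAverage_eqOn ((convex_closedBall 0 s).starConvex (mem_closedBall_self hs.le)) hΨφ
  have hsubΨ : SubMeanValueOn (radialAverage Ψ) (ball 0 s) :=
    subMeanValueOn_radialAverage Ψ.continuous ((convex_ball 0 s).starConvex (mem_ball_self hs))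
      (hsub.congr (hΨφ.symm.mono ball_subset_closedBall))
  have hbd : ∀ w ∈ sphere 0 s, radialAverage Ψ w ≤ s⁻¹ * M := by
    intro w hw
    have hpolar : w = s * exp (arg w * I) := by
      rw [← mem_sphere_zero_iff_norm.1 hw, norm_mul_exp_arg_mul_I]
    rw [hrad (sphere_subset_closedBall hw), hpolar, radialAverage_ofReal_mul _ _ hs.ne']
    exact mul_le_mul_of_nonneg_left (hM _) (inv_nonneg.2 hs.le)
  have hz : (r : ℂ) * exp (θ * I) ∈ closedBall 0 s := by
    rwa [mem_closedBall_zero_iff, norm_mul, norm_exp_ofReal_mul_I, mul_one, norm_real,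
      Real.norm_of_nonneg hr]
  have := hsubΨ.le_of_forall_sphere_le
    (continuous_radialAverage Ψ.continuous).continuousOn hbd _ hz
  rw [hrad hz, radialAverage_ofReal_mul _ _ hrpos.ne', inv_mul_le_iff₀ hrpos] at this
  calc _ ≤ r * (s⁻¹ * M) := this
    _ = r / s * M := by ring

/-- Beardon-type lemma: if φ is subharmonic (continuous with the sub-mean-value
    property) on 𝔻 and A(r) = sup_θ ∫₀^r φ(ρe^{iθ}) dρ ≤ 1 for all r ∈ [0,1),
    then A(r) ≤ r. -/
theorem beardon_radial (φ : ℂ → ℝ)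
    (hcont : ContinuousOn φ (Metric.ball 0 1))
    (hsub : ∀ z ∈ Metric.ball (0:ℂ) 1, ∀ ρ : ℝ, 0 < ρ →
      Metric.closedBall z ρ ⊆ Metric.ball (0:ℂ) 1 →
      φ z ≤ (1 / (2 * Real.pi)) *
        ∫ θ in (0:ℝ)..(2 * Real.pi), φ (z + ρ * Complex.exp (θ * Complex.I)))
    (hA : ∀ r ∈ Set.Ico (0:ℝ) 1, ∀ θ : ℝ,
      ∫ ρ in (0:ℝ)..r, φ (ρ * Complex.exp (θ * Complex.I)) ≤ 1) :
    ∀ r ∈ Set.Ico (0:ℝ) 1, ∀ θ : ℝ,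
      ∫ ρ in (0:ℝ)..r, φ (ρ * Complex.exp (θ * Complex.I)) ≤ r := by
  rintro r ⟨hr0, hr1⟩ θ
  have hφ : SubMeanValueOn φ (ball 0 1) := fun z hz ρ hρ hball => by
    simpa only [circleAverage, circleMap, smul_eq_mul, one_div] using hsub z hz ρ hρ hball
  have hbound : ∀ s ∈ Ioo r 1, ∫ ρ in (0:ℝ)..r, φ (ρ * exp (θ * I)) ≤ r / s * 1 :=
    fun s ⟨hrs, hs1⟩ => (hφ.mono (ball_subset_ball hs1.le)).radial_integral_le
      (hcont.mono (closedBall_subset_ball hs1)) (hA s ⟨hr0.trans hrs.le, hs1⟩) hr0 hrs.le θ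
  have hlim : Tendsto (fun s => r / s * 1) (𝓝[<] 1) (𝓝 r) := by
    have : ContinuousAt (fun s => r / s * 1) 1 := by fun_prop (disch := norm_num)
    simpa using this.tendsto.mono_left nhdsWithin_le_nhds
  exact ge_of_tendsto hlim (eventually_of_mem (Ioo_mem_nhdsLT hr1) hbound)
end

section
/- Let ω be a majorant, α ∈ [0,1], and C₅ > 0. Suppose f ∈ C¹(𝔻) satisfies ‖D_f(z)‖ ≤ C₅/ω((1−|z|)^{1−α}) for all z ∈ 𝔻. Then for all z₁ ≠ z₂ in 𝔻, |f(z₁) − f(z₂)| ≤ (Γ((1+α)/2)²/Γ(1+α)) · C₅ |z₁ − z₂| / ω(((1−|z₁|)(1−|z₂|))^{(1−α)/2}). -/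
open Complex Metric Set

/-! Integrate `‖D_f‖` along `χ(t) = z₂ + t(z₁ - z₂)`. Writing `d(z) = 1 - |z|`, convexity of the
norm gives `d(χ(t)) ≥ t d(z₁) + (1 - t) d(z₂) ≥ √(t(1-t) d(z₁) d(z₂))`, and `ω(νs) ≥ νω(s)` for
`ν ≤ 1` turns the hypothesis into `‖D_f(χ(t))‖ ≤ C₅ (t(1-t))^((α-1)/2) / ω((d(z₁)d(z₂))^((1-α)/2))`.
The remaining integral is the Beta value `B((1+α)/2, (1+α)/2) = Γ((1+α)/2)² / Γ(1+α)`. -/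

open MeasureTheory
open scoped ComplexConjugate

structure IsMajorant (ω : ℝ → ℝ) : Prop where
  monotoneOn : MonotoneOn ω (Ici 0)
  map_zero : ω 0 = 0
  antitoneOn_div : AntitoneOn (fun t => ω t / t) (Ioi 0)

namespace IsMajorant

variable {ω : ℝ → ℝ}

lemma nonneg (hω : IsMajorant ω) {t : ℝ} (ht : 0 ≤ t) : 0 ≤ ω t :=
  hω.map_zero ▸ hω.monotoneOn (mem_Ici.2 le_rfl) ht ht

lemma mul_le_apply_mul (hω : IsMajorant ω) {ν s : ℝ} (hν0 : 0 < ν) (hν1 : ν ≤ 1)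
    (hs : 0 < s) : ν * ω s ≤ ω (ν * s) := by
  have hνs : 0 < ν * s := mul_pos hν0 hs
  have h := hω.antitoneOn_div (mem_Ioi.2 hνs) (mem_Ioi.2 hs) (mul_le_of_le_one_left hs.le hν1)
  rw [div_le_div_iff₀ hs hνs] at h
  nlinarith

lemma apply_eq_zero_of_apply_eq_zero (hω : IsMajorant ω) {s x : ℝ} (hs : 0 < s) (hωs : ω s = 0)
    (hx : 0 ≤ x) : ω x = 0 := by
  refine le_antisymm ?_ (hω.nonneg hx)
  rcases le_or_gt x s with hxs | hsx
  · exact hωs ▸ hω.monotoneOn hx hs.le hxs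
  · have h := hω.antitoneOn_div (mem_Ioi.2 hs) (mem_Ioi.2 (hs.trans hsx)) hsx.le
    dsimp only at h
    rw [hωs, zero_div, div_le_iff₀ (hs.trans hsx), zero_mul] at h
    exact h

lemma div_apply_le_div_mul_apply (hω : IsMajorant ω) {C ν s x : ℝ} (hC : 0 ≤ C) (hν0 : 0 < ν)
    (hν1 : ν ≤ 1) (hs : 0 < s) (hx : ν * s ≤ x) : C / ω x ≤ C / (ν * ω s) := by
  have hx0 : 0 ≤ x := (mul_pos hν0 hs).le.trans hx
  -- if `ω s = 0` then `ω` vanishes on `[0, ∞)` and both sides are junk divisions by zero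
  rcases (hω.nonneg hs.le).eq_or_lt with hωs | hωs
  · simp [hω.apply_eq_zero_of_apply_eq_zero hs hωs.symm hx0, ← hωs]
  · exact div_le_div_of_nonneg_left hC (mul_pos hν0 hωs)
      ((hω.mul_le_apply_mul hν0 hν1 hs).trans (hω.monotoneOn (mul_pos hν0 hs).le hx0 hx))

end IsMajorant

lemma ofReal_cpow_mul_one_sub_cpow {x : ℝ} (hx : x ∈ Icc (0:ℝ) 1) (u v : ℝ) :
    (x : ℂ) ^ ((u : ℂ) - 1) * (1 - (x : ℂ)) ^ ((v : ℂ) - 1)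
      = ((x ^ (u - 1) * (1 - x) ^ (v - 1) : ℝ) : ℂ) := by
  rw [ofReal_mul, ofReal_cpow hx.1, ofReal_cpow (sub_nonneg.2 hx.2)]
  push_cast
  ring

lemma intervalIntegrable_rpow_mul_one_sub_rpow {u v : ℝ} (hu : 0 < u) (hv : 0 < v) :
    IntervalIntegrable (fun t : ℝ => t ^ (u - 1) * (1 - t) ^ (v - 1)) volume 0 1 := by
  have h := betaIntegral_convergent (u := u) (v := v) (by simpa) (by simpa)
  rw [intervalIntegrable_iff_integrableOn_Ioc_of_le zero_le_one] at h ⊢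
  simpa [IntegrableOn] using (h.congr_fun
    (fun x hx => ofReal_cpow_mul_one_sub_cpow (Ioc_subset_Icc_self hx) u v) measurableSet_Ioc).re

lemma integral_rpow_mul_one_sub_rpow {u v : ℝ} (hu : 0 < u) (hv : 0 < v) :
    ∫ t in (0:ℝ)..1, t ^ (u - 1) * (1 - t) ^ (v - 1)
      = Real.Gamma u * Real.Gamma v / Real.Gamma (u + v) := by
  have h := betaIntegral_eq_Gamma_mul_div (u := u) (v := v) (by simpa) (by simpa)
  rw [betaIntegral, ← ofReal_add, Gamma_ofReal, Gamma_ofReal, Gamma_ofReal,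
    intervalIntegral.integral_congr
      (g := fun x : ℝ => ((x ^ (u - 1) * (1 - x) ^ (v - 1) : ℝ) : ℂ))
      (fun x hx => ofReal_cpow_mul_one_sub_cpow (by rwa [uIcc_of_le zero_le_one] at hx) u v),
    intervalIntegral.integral_ofReal] at h
  exact_mod_cast h

lemma fderiv_apply_eq_wdz_mul_add_wdzbar_mul_conj (f : ℂ → ℂ) (z v : ℂ) :
    fderiv ℝ f z v = wdz f z * v + wdzbar f z * conj v := by
  obtain ⟨a, b, rfl⟩ : ∃ a b : ℝ, v = a + b * I := ⟨v.re, v.im, (re_add_im v).symm⟩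
  have hv : (a : ℂ) + b * I = a • (1 : ℂ) + b • I := by simp [real_smul]
  rw [hv, map_add, map_smul, map_smul, ← hv, map_add, map_mul, conj_ofReal, conj_ofReal, conj_I,
    wdz, wdzbar, real_smul, real_smul]
  linear_combination ((b : ℂ) * fderiv ℝ f z I) * I_mul_I

lemma norm_fderiv_le_norm_wdz_add_norm_wdzbar (f : ℂ → ℂ) (z : ℂ) :
    ‖fderiv ℝ f z‖ ≤ ‖wdz f z‖ + ‖wdzbar f z‖ := by
  refine ContinuousLinearMap.opNorm_le_bound _ (by positivity) fun v => ?_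
  rw [fderiv_apply_eq_wdz_mul_add_wdzbar_mul_conj, add_mul]
  refine (norm_add_le _ _).trans_eq ?_
  rw [norm_mul, norm_mul, norm_conj]

section Segment

variable {E F : Type*} [NormedAddCommGroup E] [NormedSpace ℝ E]
  [NormedAddCommGroup F] [NormedSpace ℝ F] [CompleteSpace F]

lemma norm_add_smul_sub_le {x y : E} {t : ℝ} (ht : t ∈ Icc (0:ℝ) 1) :
    ‖y + t • (x - y)‖ ≤ t * ‖x‖ + (1 - t) * ‖y‖ := by
  have h : y + t • (x - y) = t • x + (1 - t) • y := by
    rw [smul_sub, sub_smul, one_smul]; abel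
  rw [h]
  refine (norm_add_le _ _).trans_eq ?_
  rw [norm_smul, norm_smul, Real.norm_of_nonneg ht.1, Real.norm_of_nonneg (sub_nonneg.2 ht.2)]

lemma mul_one_sub_mul_le_sq_one_sub_norm {x y : E} (hx : ‖x‖ ≤ 1) (hy : ‖y‖ ≤ 1) {t : ℝ}
    (ht : t ∈ Icc (0:ℝ) 1) :
    t * (1 - t) * ((1 - ‖x‖) * (1 - ‖y‖)) ≤ (1 - ‖y + t • (x - y)‖) ^ 2 := by
  have hχ := norm_add_smul_sub_le (x := x) (y := y) ht
  have ha : 0 ≤ t * (1 - ‖x‖) := mul_nonneg ht.1 (sub_nonneg.2 hx)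
  have hb : 0 ≤ (1 - t) * (1 - ‖y‖) := mul_nonneg (sub_nonneg.2 ht.2) (sub_nonneg.2 hy)
  -- `1 - ‖y + t • (x - y)‖ ≥ a + b` for the nonnegative `a, b` above, and `(a + b)² ≥ a b`
  nlinarith [mul_nonneg ha hb, mul_nonneg (add_nonneg ha hb) (add_nonneg ha hb)]

lemma mul_rpow_le_one_sub_norm_rpow {x y : E} (hx : ‖x‖ ≤ 1) (hy : ‖y‖ ≤ 1) {t : ℝ}
    (ht : t ∈ Icc (0:ℝ) 1) {p : ℝ} (hp : 0 ≤ p) :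
    (t * (1 - t)) ^ (p / 2) * ((1 - ‖x‖) * (1 - ‖y‖)) ^ (p / 2)
      ≤ (1 - ‖y + t • (x - y)‖) ^ p := by
  have hd : 0 ≤ 1 - ‖y + t • (x - y)‖ := by
    nlinarith [norm_add_smul_sub_le (x := x) (y := y) ht, ht.1, ht.2]
  rw [← Real.mul_rpow (mul_nonneg ht.1 (sub_nonneg.2 ht.2))
    (mul_nonneg (sub_nonneg.2 hx) (sub_nonneg.2 hy))]
  calc _ ≤ ((1 - ‖y + t • (x - y)‖) ^ 2) ^ (p / 2) :=
        Real.rpow_le_rpow (mul_nonneg (mul_nonneg ht.1 (sub_nonneg.2 ht.2))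
            (mul_nonneg (sub_nonneg.2 hx) (sub_nonneg.2 hy)))
          (mul_one_sub_mul_le_sq_one_sub_norm hx hy ht) (by positivity)
    _ = (1 - ‖y + t • (x - y)‖) ^ p := by
        rw [← Real.rpow_natCast, ← Real.rpow_mul hd]; ring_nf

theorem norm_sub_le_integral_mul_of_norm_fderiv_le {f : E → F} {U : Set E} (hUc : Convex ℝ U)
    (hUo : IsOpen U) (hf : ContDiffOn ℝ 1 f U) {x y : E} (hx : x ∈ U) (hy : y ∈ U)
    {B : ℝ → ℝ} (hB : IntervalIntegrable B volume 0 1)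
    (hbound : ∀ t ∈ Ioo (0:ℝ) 1, ‖fderiv ℝ f (y + t • (x - y))‖ ≤ B t) :
    ‖f x - f y‖ ≤ (∫ t in (0:ℝ)..1, B t) * ‖x - y‖ := by
  have hseg : ∀ t ∈ uIcc (0:ℝ) 1, y + t • (x - y) ∈ U := fun t ht =>
    hUc.add_smul_sub_mem hy hx (by rwa [uIcc_of_le zero_le_one] at ht)
  have hderiv : ∀ t ∈ uIcc (0:ℝ) 1,
      HasDerivAt (fun t => f (y + t • (x - y))) (fderiv ℝ f (y + t • (x - y)) (x - y)) t := by
    intro t ht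
    have hf' := (hf.differentiableOn one_ne_zero _ (hseg t ht)).differentiableAt
      (hUo.mem_nhds (hseg t ht))
    have hχ : HasDerivAt (fun t : ℝ => y + t • (x - y)) (x - y) t := by
      simpa using ((hasDerivAt_id t).smul_const (x - y)).const_add y
    exact hf'.hasFDerivAt.comp_hasDerivAt t hχ
  have hcont : ContinuousOn (fun t : ℝ => fderiv ℝ f (y + t • (x - y)) (x - y)) (uIcc 0 1) :=
    ((hf.continuousOn_fderiv_of_isOpen hUo le_rfl).comp (by fun_prop) hseg).clm_apply
      continuousOn_const
  calc ‖f x - f y‖ = ‖∫ t in (0:ℝ)..1, fderiv ℝ f (y + t • (x - y)) (x - y)‖ := by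
        rw [intervalIntegral.integral_eq_sub_of_hasDerivAt hderiv hcont.intervalIntegrable]
        simp
    _ ≤ ∫ t in (0:ℝ)..1, B t * ‖x - y‖ := by
        refine intervalIntegral.norm_integral_le_of_norm_le zero_le_one ?_ (hB.mul_const _)
        filter_upwards [volume.ae_ne 1] with t ht1 ht
        exact (ContinuousLinearMap.le_opNorm _ _).trans (mul_le_mul_of_nonneg_right
          (hbound t ⟨ht.1, ht.2.lt_of_ne ht1⟩) (norm_nonneg _))
    _ = (∫ t in (0:ℝ)..1, B t) * ‖x - y‖ := intervalIntegral.integral_mul_const _ _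

end Segment

theorem upper_modulus_bound_general (ω : ℝ → ℝ)
    (hmono : MonotoneOn ω (Set.Ici 0))
    (h0 : ω 0 = 0)
    (hdec : AntitoneOn (fun t => ω t / t) (Set.Ioi 0))
    (α : ℝ) (hα : α ∈ Set.Icc (0:ℝ) 1) (C₅ : ℝ) (hC₅ : 0 < C₅)
    (f : ℂ → ℂ) (hreg : ContDiffOn ℝ 1 f (Metric.ball 0 1))
    (hbound : ∀ z ∈ Metric.ball (0:ℂ) 1,
      ‖wdz f z‖ + ‖wdzbar f z‖
        ≤ C₅ / ω ((1 - ‖z‖) ^ (1 - α))) :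
    ∀ z₁ ∈ Metric.ball (0:ℂ) 1, ∀ z₂ ∈ Metric.ball (0:ℂ) 1,
      ‖f z₁ - f z₂‖
        ≤ (Real.Gamma ((1 + α) / 2) ^ 2 / Real.Gamma (1 + α)) * C₅
            * ‖z₁ - z₂‖
            / ω (((1 - ‖z₁‖) * (1 - ‖z₂‖)) ^ ((1 - α) / 2)) := by
  have hω : IsMajorant ω := ⟨hmono, h0, hdec⟩
  obtain ⟨hα0, hα1⟩ := hα
  intro z₁ hz₁ z₂ hz₂
  have hz₁' := (mem_ball_zero_iff.1 hz₁).le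
  have hz₂' := (mem_ball_zero_iff.1 hz₂).le
  set s₀ := ((1 - ‖z₁‖) * (1 - ‖z₂‖)) ^ ((1 - α) / 2)
  have hs₀ : 0 < s₀ := Real.rpow_pos_of_pos
    (mul_pos (by simpa using hz₁) (by simpa using hz₂)) _
  set c := (1 + α) / 2
  have hc : 0 < c := by positivity
  have hderiv : ∀ t ∈ Ioo (0:ℝ) 1, ‖fderiv ℝ f (z₂ + t • (z₁ - z₂))‖
      ≤ C₅ / ω s₀ * (t ^ (c - 1) * (1 - t) ^ (c - 1)) := by
    intro t ⟨ht0, ht1⟩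
    have ht : t ∈ Icc (0:ℝ) 1 := ⟨ht0.le, ht1.le⟩
    calc ‖fderiv ℝ f (z₂ + t • (z₁ - z₂))‖
        ≤ C₅ / ω ((1 - ‖z₂ + t • (z₁ - z₂)‖) ^ (1 - α)) :=
          (norm_fderiv_le_norm_wdz_add_norm_wdzbar f _).trans
            (hbound _ ((convex_ball 0 1).add_smul_sub_mem hz₂ hz₁ ht))
      _ ≤ C₅ / ((t * (1 - t)) ^ ((1 - α) / 2) * ω s₀) :=
          hω.div_apply_le_div_mul_apply hC₅.le
            (by have := mul_pos ht0 (sub_pos.2 ht1); positivity)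
            (Real.rpow_le_one (by nlinarith) (by nlinarith) (by linarith)) hs₀
            (mul_rpow_le_one_sub_norm_rpow hz₁' hz₂' ht (by linarith))
      _ = C₅ / ω s₀ * (t ^ (c - 1) * (1 - t) ^ (c - 1)) := by
          rw [Real.mul_rpow ht0.le (sub_pos.2 ht1).le, show c - 1 = -((1 - α) / 2) by ring,
            Real.rpow_neg ht0.le, Real.rpow_neg (sub_pos.2 ht1).le]
          ring
  calc ‖f z₁ - f z₂‖
      ≤ (∫ t in (0:ℝ)..1, C₅ / ω s₀ * (t ^ (c - 1) * (1 - t) ^ (c - 1))) * ‖z₁ - z₂‖ :=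
        norm_sub_le_integral_mul_of_norm_fderiv_le (convex_ball 0 1) isOpen_ball hreg hz₁ hz₂
          ((intervalIntegrable_rpow_mul_one_sub_rpow hc hc).const_mul _) hderiv
    _ = _ := by
        rw [intervalIntegral.integral_const_mul, integral_rpow_mul_one_sub_rpow hc hc,
          show c + c = 1 + α by ring]
        ring

/-- Upper Lipschitz-type bound: if ‖D_f(z)‖ ≤ C₅/ω((1−|z|)^{1−α}) on 𝔻 for a
    majorant ω, then |f(z₁) − f(z₂)| ≤ (Γ((1+α)/2)²/Γ(1+α)) C₅ |z₁−z₂| /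
    ω(((1−|z₁|)(1−|z₂|))^{(1−α)/2}). -/
theorem upper_modulus_bound (ω : ℝ → ℝ)
    (hcont : ContinuousOn ω (Set.Ici 0))
    (hmono : MonotoneOn ω (Set.Ici 0))
    (h0 : ω 0 = 0)
    (hdec : AntitoneOn (fun t => ω t / t) (Set.Ioi 0))
    (α : ℝ) (hα : α ∈ Set.Icc (0:ℝ) 1) (C₅ : ℝ) (hC₅ : 0 < C₅)
    (f : ℂ → ℂ) (hreg : ContDiffOn ℝ 1 f (Metric.ball 0 1))
    (hbound : ∀ z ∈ Metric.ball (0:ℂ) 1,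
      ‖wdz f z‖ + ‖wdzbar f z‖
        ≤ C₅ / ω ((1 - ‖z‖) ^ (1 - α))) :
    ∀ z₁ ∈ Metric.ball (0:ℂ) 1, ∀ z₂ ∈ Metric.ball (0:ℂ) 1,
      ‖f z₁ - f z₂‖
        ≤ (Real.Gamma ((1 + α) / 2) ^ 2 / Real.Gamma (1 + α)) * C₅
            * ‖z₁ - z₂‖
            / ω (((1 - ‖z₁‖) * (1 - ‖z₂‖)) ^ ((1 - α) / 2)) :=
  upper_modulus_bound_general ω hmono h0 hdec α hα C₅ hC₅ f hreg hbound
end
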